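/- arXiv:1112.5223 — 3 statements merged into one kernel-verified Lean document; each statement's English description precedes it below -/
import Mathlib

section
/- (Divided difference equation, i ≥ 1) Fix n ≥ 1, i ≥ 1, and a strict partition λ of length ≤ n. Let s_i denote the ring automorphism of ℤ[β][b_1, b_2, …] exchanging b_i and b_{i+1} and fixing β and all other b_k, applied to the coefficients of polynomials in x_1,…,x_n, and set e(α_i) = b_{i+1} ⊖ b_i. If i+1 is a part of λ and i is not a part of λ, then ( s_i(GQ_λ(x_1,…,x_n|b)) − (1 + β·e(α_i))·GQ_λ(x_1,…,x_n|b) ) / e(α_i) = GQ_{λ^{(i)}}(x_1,…,x_n|b), where λ^{(i)} is obtained from λ by replacing its part i+1 with i. Otherwise, ( s_i(GQ_λ(x_1,…,x_n|b)) − (1 + β·e(α_i))·GQ_λ(x_1,…,x_n|b) ) / e(α_i) = −β·GQ_λ(x_1,…,x_n|b). -/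
/-!
STATEMENT 15 (Divided difference equation, i ≥ 1): Fix n ≥ 1, i ≥ 1, and a strict
partition λ of length ≤ n. Let s_i exchange the parameters b_i and b_{i+1}
(so s_i(GQ_λ(x|b)) is the defining expression with the swapped parameter
sequence), and set e(α_i) = b_{i+1} ⊖ b_i. If i+1 is a part of λ and i is not,
then (s_i(GQ_λ) − (1 + β e(α_i)) GQ_λ)/e(α_i) = GQ_{λ^{(i)}}, where λ^{(i)} is
obtained from λ by replacing the part i+1 with i. Otherwise
(s_i(GQ_λ) − (1 + β e(α_i)) GQ_λ)/e(α_i) = −β GQ_λ.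
-/

noncomputable section

namespace Stmt15

variable {F : Type} [Field F]

/-- x ⊕ y = x + y + βxy, for a fixed element `be` playing the role of β. -/
def op (be a c : F) : F := a + c + be * a * c

/-- x ⊖ y = (x − y)/(1 + βy). -/
def om (be a c : F) : F := (a - c) / (1 + be * c)

/-- `[x|c]^k = (x ⊕ c 1)(x ⊕ c 2)⋯(x ⊕ c k)`. -/
def fb (be : F) (c : ℕ → F) (xx : F) (k : ℕ) : F :=
  ∏ t ∈ Finset.range k, op be xx (c (t + 1))

/-- `[[x|c]]^k = (x ⊕ x)(x ⊕ c 1)⋯(x ⊕ c (k−1))`. -/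
def db (be : F) (c : ℕ → F) (xx : F) (k : ℕ) : F :=
  ∏ t ∈ Finset.range k, if t = 0 then op be xx xx else op be xx (c t)

/-- `Π_{i=1}^r Π_{j=i+1}^N (y_i ⊕ y_j)/(y_i ⊖ y_j)`. -/
def Phi (be : F) {N : ℕ} (y : Fin N → F) (r : ℕ) (hr : r ≤ N) : F :=
  ∏ i : Fin r, ∏ j ∈ Finset.univ.filter fun j : Fin N => (i : ℕ) < (j : ℕ),
    op be (y (Fin.castLE hr i)) (y j) / om be (y (Fin.castLE hr i)) (y j)

/-- The Hall–Littlewood-type expression defining `GP_λ(y_1,…,y_N | c)`. -/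
def GP (be : F) (c : ℕ → F) {N : ℕ} (y : Fin N → F) {r : ℕ} (hr : r ≤ N)
    (lam : Fin r → ℕ) : F :=
  (((N - r).factorial : F))⁻¹ *
    ∑ w : Equiv.Perm (Fin N),
      (∏ j : Fin r, fb be c (y (w (Fin.castLE hr j))) (lam j)) *
        Phi be (fun k => y (w k)) r hr

/-- The Hall–Littlewood-type expression defining `GQ_λ(y_1,…,y_N | c)`. -/
def GQ (be : F) (c : ℕ → F) {N : ℕ} (y : Fin N → F) {r : ℕ} (hr : r ≤ N)
    (lam : Fin r → ℕ) : F :=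
  (((N - r).factorial : F))⁻¹ *
    ∑ w : Equiv.Perm (Fin N),
      (∏ j : Fin r, db be c (y (w (Fin.castLE hr j))) (lam j)) *
        Phi be (fun k => y (w k)) r hr

/-- Rational function field in the variables x_1,…,x_n (= `Sum.inl i`),
β (= `Sum.inr 0`) and b_1, b_2, … (= `Sum.inr k`, k ≥ 1), over ℚ. -/
abbrev K (n : ℕ) : Type := FractionRing (MvPolynomial (Fin n ⊕ ℕ) ℚ)

def xv (n : ℕ) (i : Fin n) : K n :=
  algebraMap (MvPolynomial (Fin n ⊕ ℕ) ℚ) (K n) (MvPolynomial.X (Sum.inl i))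

def bet (n : ℕ) : K n :=
  algebraMap (MvPolynomial (Fin n ⊕ ℕ) ℚ) (K n) (MvPolynomial.X (Sum.inr 0))

/-- The parameters b_k (k ≥ 1), with the convention b_0 = 0. -/
def bv (n : ℕ) (k : ℕ) : K n :=
  if k = 0 then 0 else
    algebraMap (MvPolynomial (Fin n ⊕ ℕ) ℚ) (K n) (MvPolynomial.X (Sum.inr k))

/-- The parameter sequence with `b_i` and `b_{i+1}` exchanged. -/
def bswap (n i : ℕ) : ℕ → K n := fun k =>
  if k = i then bv n (i + 1) else if k = i + 1 then bv n i else bv n k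

section Aux

variable (be : F)

lemma op_comm (a c : F) : op be a c = op be c a := by unfold op; ring

lemma opdiff (a b b' : F) : op be a b' - op be a b = (b' - b) * (1 + be * a) := by
  unfold op; ring

lemma key1 (a c : F) :
    (1 + be * a) / om be a c + (1 + be * c) / om be c a = 0 := by
  unfold om
  rcases eq_or_ne a c with h | h
  · subst h; simp
  · rw [div_div_eq_mul_div, div_div_eq_mul_div,
      div_add_div _ _ (sub_ne_zero.2 h) (sub_ne_zero.2 (Ne.symm h)),
      div_eq_zero_iff]
    left; ring

lemma key2 {b : F} (x b' : F) (hb : 1 + be * b ≠ 0) :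
    op be x b' - (1 + be * om be b' b) * op be x b = om be b' b := by
  unfold op om
  field_simp
  ring

lemma db_split (cc : ℕ → F) (x : F) {k : ℕ} (hk : 1 ≤ k) :
    db be cc x (k + 1) = db be cc x k * op be x (cc k) := by
  unfold db
  rw [Finset.prod_range_succ, if_neg (by omega)]

variable {i : ℕ} {c c' : ℕ → F}
  (hi : 1 ≤ i)
  (hswap : ∀ t, c' t = if t = i then c (i + 1) else if t = i + 1 then c i else c t)

include hi hswap in
lemma db_swap (x : F) {k : ℕ} (hk : k ≠ i + 1) :
    db be c' x k = db be c x k := by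
  rcases le_or_gt k i with h | h
  · unfold db
    refine Finset.prod_congr rfl fun t ht => ?_
    rw [Finset.mem_range] at ht
    rcases eq_or_ne t 0 with rfl | h0
    · simp
    · rw [if_neg h0, if_neg h0, hswap t, if_neg (show t ≠ i by omega),
        if_neg (show t ≠ i + 1 by omega)]
  · have h2 : i + 1 < k := by omega
    unfold db
    refine Finset.prod_equiv (Equiv.swap i (i + 1)) (fun t => ?_) (fun t ht => ?_)
    · simp only [Finset.mem_range]
      rcases eq_or_ne t i with rfl | h3
      · rw [Equiv.swap_apply_left]; omega
      rcases eq_or_ne t (i + 1) with rfl | h4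
      · rw [Equiv.swap_apply_right]; omega
      · rw [Equiv.swap_apply_of_ne_of_ne h3 h4]
    · rcases eq_or_ne t i with rfl | h3
      · rw [Equiv.swap_apply_left, if_neg (by omega), if_neg (by omega),
          hswap, if_pos rfl]
      rcases eq_or_ne t (i + 1) with rfl | h4
      · rw [Equiv.swap_apply_right, if_neg (by omega), if_neg (by omega),
          hswap, if_neg (by omega), if_pos rfl]
      · rw [Equiv.swap_apply_of_ne_of_ne h3 h4]
        rcases eq_or_ne t 0 with rfl | h5
        · simp
        · rw [if_neg h5, if_neg h5, hswap, if_neg h3, if_neg h4]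

end Aux
section PhiLemma

variable (be : F) {N r : ℕ} (hr : r ≤ N)

lemma prod_split {A B : Fin r} (hBA : B ≠ A) (f : Fin r → F) :
    ∏ a : Fin r, f a =
      f A * f B * ∏ a ∈ (Finset.univ.erase A).erase B, f a := by
  rw [← Finset.mul_prod_erase Finset.univ f (Finset.mem_univ A),
    ← Finset.mul_prod_erase (Finset.univ.erase A) f
      (Finset.mem_erase.2 ⟨hBA, Finset.mem_univ B⟩), mul_assoc]

lemma phi_decomp (z : Fin N → F) (A B : Fin r) (hAB : (B : ℕ) = (A : ℕ) + 1) :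
    ∃ R : F,
      Phi be z r hr =
        R * (op be (z (Fin.castLE hr A)) (z (Fin.castLE hr B)) /
          om be (z (Fin.castLE hr A)) (z (Fin.castLE hr B))) ∧
      Phi be (z ∘ Equiv.swap (Fin.castLE hr A) (Fin.castLE hr B)) r hr =
        R * (op be (z (Fin.castLE hr A)) (z (Fin.castLE hr B)) /
          om be (z (Fin.castLE hr B)) (z (Fin.castLE hr A))) := by
  classical
  set p := Fin.castLE hr A with hp
  set q := Fin.castLE hr B with hq
  have hpv : (p : ℕ) = (A : ℕ) := rfl
  have hqv : (q : ℕ) = (A : ℕ) + 1 := by rw [hq, Fin.coe_castLE, hAB]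
  have hpq : p ≠ q := fun h => by rw [Fin.ext_iff, hpv, hqv] at h; omega
  have hBA : B ≠ A := fun h => by rw [Fin.ext_iff, hAB] at h; omega
  set τ := Equiv.swap p q with hτ
  have hτp : τ p = q := Equiv.swap_apply_left p q
  have hτq : τ q = p := Equiv.swap_apply_right p q
  set S : Fin r → Finset (Fin N) :=
    fun a => Finset.univ.filter fun j : Fin N => (a : ℕ) < (j : ℕ) with hS
  set g : Fin N → Fin N → F := fun u v => op be (z u) (z v) / om be (z u) (z v)
    with hg
  have hmem : ∀ (a : Fin r) (j : Fin N), j ∈ S a ↔ (a : ℕ) < (j : ℕ) := by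
    intro a j; simp [hS]
  have hSA : S A = insert q (S B) := by
    ext j
    rw [hmem, Finset.mem_insert, hmem, Fin.ext_iff, hqv, hAB]
    omega
  have hqB : q ∉ S B := by rw [hmem, hqv, hAB]; omega
  have hfix : ∀ j ∈ S B, τ j = j := by
    intro j hj
    rw [hmem, hAB] at hj
    exact Equiv.swap_apply_of_ne_of_ne
      (fun h => by rw [Fin.ext_iff, hpv] at h; omega)
      (fun h => by rw [Fin.ext_iff, hqv] at h; omega)
  refine ⟨(∏ j ∈ S B, g p j) * (∏ j ∈ S B, g q j) *
    ∏ a ∈ (Finset.univ.erase A).erase B, ∏ j ∈ S a, g (Fin.castLE hr a) j,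
    ?_, ?_⟩
  · show (∏ a : Fin r, ∏ j ∈ S a, g (Fin.castLE hr a) j) = _
    rw [prod_split hBA, hSA, Finset.prod_insert hqB, ← hp, ← hq]
    ring
  · show (∏ a : Fin r, ∏ j ∈ S a, g (τ (Fin.castLE hr a)) (τ j)) = _
    rw [prod_split hBA, ← hp, ← hq]
    have e1 : (∏ j ∈ S A, g (τ p) (τ j)) = g q p * ∏ j ∈ S B, g q j := by
      rw [hSA, Finset.prod_insert hqB, hτp, hτq]
      have : (∏ j ∈ S B, g q (τ j)) = ∏ j ∈ S B, g q j :=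
        Finset.prod_congr rfl fun j hj => by rw [hfix j hj]
      rw [this]
    have e2 : (∏ j ∈ S B, g (τ q) (τ j)) = ∏ j ∈ S B, g p j := by
      rw [hτq]
      exact Finset.prod_congr rfl fun j hj => by rw [hfix j hj]
    have e3 : ∀ a ∈ (Finset.univ.erase A).erase B,
        (∏ j ∈ S a, g (τ (Fin.castLE hr a)) (τ j)) =
          ∏ j ∈ S a, g (Fin.castLE hr a) j := by
      intro a ha
      rw [Finset.mem_erase, Finset.mem_erase] at ha
      have haA : (a : ℕ) ≠ (A : ℕ) := fun h => ha.2.1 (Fin.ext h)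
      have haB : (a : ℕ) ≠ (A : ℕ) + 1 := fun h =>
        ha.1 (Fin.ext (by rw [h, hAB]))
      have hfa : τ (Fin.castLE hr a) = Fin.castLE hr a :=
        Equiv.swap_apply_of_ne_of_ne
          (fun h => haA (by rw [Fin.ext_iff] at h; exact h))
          (fun h => haB (by rw [Fin.ext_iff, hqv] at h; exact h))
      rw [hfa]
      refine Finset.prod_equiv τ (fun j => ?_) (fun j hj => rfl)
      rw [hmem, hmem]
      rcases eq_or_ne j p with rfl | h1
      · rw [hτp, hpv, hqv]; omega
      rcases eq_or_ne j q with rfl | h2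
      · rw [hτq, hpv, hqv]; omega
      · rw [Equiv.swap_apply_of_ne_of_ne h1 h2]
    rw [e1, e2, Finset.prod_congr rfl e3]
    have hopc : g q p = op be (z p) (z q) / om be (z q) (z p) := by
      rw [hg]; simp only []
      rw [op_comm]
    rw [hopc]
    ring

end PhiLemma
section PairLemma

variable (be : F) {N r : ℕ} (hr : r ≤ N)

lemma pairG (c : ℕ → F) (z : Fin N → F) (lam' : Fin r → ℕ) (A B : Fin r)
    (hAB : (B : ℕ) = (A : ℕ) + 1) (hlam : lam' A = lam' B) :
    (1 + be * z (Fin.castLE hr A)) *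
        ((∏ j : Fin r, db be c (z (Fin.castLE hr j)) (lam' j)) *
          Phi be z r hr) +
      (1 + be * (z ∘ Equiv.swap (Fin.castLE hr A) (Fin.castLE hr B))
          (Fin.castLE hr A)) *
        ((∏ j : Fin r,
            db be c ((z ∘ Equiv.swap (Fin.castLE hr A) (Fin.castLE hr B))
              (Fin.castLE hr j)) (lam' j)) *
          Phi be (z ∘ Equiv.swap (Fin.castLE hr A) (Fin.castLE hr B)) r hr)
      = 0 := by
  classical
  obtain ⟨R, h1, h2⟩ := phi_decomp be hr z A B hAB
  set p := Fin.castLE hr A with hp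
  set q := Fin.castLE hr B with hq
  set τ := Equiv.swap p q with hτ
  have hτp : τ p = q := Equiv.swap_apply_left p q
  have hτq : τ q = p := Equiv.swap_apply_right p q
  have hBA : B ≠ A := fun h => by rw [Fin.ext_iff, hAB] at h; omega
  -- the db product is invariant under the swap
  have hdb : (∏ j : Fin r, db be c ((z ∘ τ) (Fin.castLE hr j)) (lam' j)) =
      ∏ j : Fin r, db be c (z (Fin.castLE hr j)) (lam' j) := by
    have key : ∀ j : Fin r,
        db be c ((z ∘ τ) (Fin.castLE hr j)) (lam' j) =
          (fun j : Fin r => db be c (z (Fin.castLE hr j)) (lam' j))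
            (Equiv.swap A B j) := by
      intro j
      rcases eq_or_ne j A with rfl | hjA
      · simp only [Function.comp_apply, Equiv.swap_apply_left]
        rw [hτp, hlam]
      rcases eq_or_ne j B with rfl | hjB
      · simp only [Function.comp_apply, Equiv.swap_apply_right]
        rw [hτq, hlam]
      · have h1 : Fin.castLE hr j ≠ p := fun h => hjA (Fin.ext (by
          rw [Fin.ext_iff] at h; exact h))
        have h2 : Fin.castLE hr j ≠ q := fun h => hjB (Fin.ext (by
          rw [Fin.ext_iff] at h; exact h))
        simp only [Function.comp_apply]
        rw [Equiv.swap_apply_of_ne_of_ne h1 h2,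
          Equiv.swap_apply_of_ne_of_ne hjA hjB]
    calc (∏ j : Fin r, db be c ((z ∘ τ) (Fin.castLE hr j)) (lam' j))
        = ∏ j : Fin r, (fun j : Fin r =>
            db be c (z (Fin.castLE hr j)) (lam' j)) (Equiv.swap A B j) :=
          Finset.prod_congr rfl fun j _ => key j
      _ = ∏ j : Fin r, db be c (z (Fin.castLE hr j)) (lam' j) := by
          exact Equiv.prod_comp (Equiv.swap A B)
            (fun j : Fin r => db be c (z (Fin.castLE hr j)) (lam' j))
  have hzp : (z ∘ τ) p = z q := by
    simp only [Function.comp_apply, hτp]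
  rw [hdb, hzp, h1, h2]
  have hk := key1 be (z p) (z q)
  set D := ∏ j : Fin r, db be c (z (Fin.castLE hr j)) (lam' j)
  set o := op be (z p) (z q)
  set m1 := om be (z p) (z q)
  set m2 := om be (z q) (z p)
  linear_combination (D * R * o) * hk

end PairLemma
section TermLemmas

variable (be : F) {N r : ℕ} (hr : r ≤ N) {i : ℕ} {c c' : ℕ → F}

lemma prod_db_swap_decomp (hi : 1 ≤ i)
    (hswap : ∀ t, c' t = if t = i then c (i + 1) else
      if t = i + 1 then c i else c t)
    (lam : Fin r → ℕ) (A : Fin r) (hA : lam A = i + 1)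
    (huni : ∀ j, j ≠ A → lam j ≠ i + 1) (z : Fin N → F) :
    (∏ j : Fin r, db be c' (z (Fin.castLE hr j)) (lam j)) =
      db be c (z (Fin.castLE hr A)) i *
        op be (z (Fin.castLE hr A)) (c (i + 1)) *
        ∏ j ∈ Finset.univ.erase A, db be c (z (Fin.castLE hr j)) (lam j) := by
  rw [← Finset.mul_prod_erase Finset.univ _ (Finset.mem_univ A), hA,
    db_split be c' _ hi, db_swap be hi hswap _ (show i ≠ i + 1 by omega),
    hswap i, if_pos rfl]
  congr 1
  exact Finset.prod_congr rfl fun j hj =>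
    db_swap be hi hswap _ (huni j (Finset.mem_erase.1 hj).1)

lemma prod_db_decomp (hi : 1 ≤ i) (lam : Fin r → ℕ) (A : Fin r)
    (hA : lam A = i + 1) (z : Fin N → F) :
    (∏ j : Fin r, db be c (z (Fin.castLE hr j)) (lam j)) =
      db be c (z (Fin.castLE hr A)) i * op be (z (Fin.castLE hr A)) (c i) *
        ∏ j ∈ Finset.univ.erase A, db be c (z (Fin.castLE hr j)) (lam j) := by
  rw [← Finset.mul_prod_erase Finset.univ _ (Finset.mem_univ A), hA,
    db_split be c _ hi]

lemma prod_db'_decomp (lam : Fin r → ℕ) (A : Fin r)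
    (hA : lam A = i + 1) (huni : ∀ j, j ≠ A → lam j ≠ i + 1) (z : Fin N → F) :
    (∏ j : Fin r, db be c (z (Fin.castLE hr j))
        (if lam j = i + 1 then i else lam j)) =
      db be c (z (Fin.castLE hr A)) i *
        ∏ j ∈ Finset.univ.erase A, db be c (z (Fin.castLE hr j)) (lam j) := by
  rw [← Finset.mul_prod_erase Finset.univ _ (Finset.mem_univ A),
    if_pos hA]
  congr 1
  exact Finset.prod_congr rfl fun j hj => by
    rw [if_neg (huni j (Finset.mem_erase.1 hj).1)]

lemma termC (hi : 1 ≤ i)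
    (hswap : ∀ t, c' t = if t = i then c (i + 1) else
      if t = i + 1 then c i else c t)
    (lam : Fin r → ℕ) (A : Fin r) (hA : lam A = i + 1)
    (huni : ∀ j, j ≠ A → lam j ≠ i + 1) (z : Fin N → F)
    (h1b : 1 + be * c i ≠ 0) :
    (∏ j : Fin r, db be c' (z (Fin.castLE hr j)) (lam j)) * Phi be z r hr -
      (1 + be * om be (c (i + 1)) (c i)) *
        ((∏ j : Fin r, db be c (z (Fin.castLE hr j)) (lam j)) *
          Phi be z r hr) =
      om be (c (i + 1)) (c i) *
        ((∏ j : Fin r, db be c (z (Fin.castLE hr j))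
            (if lam j = i + 1 then i else lam j)) * Phi be z r hr) := by
  rw [prod_db_swap_decomp be hr hi hswap lam A hA huni z,
    prod_db_decomp be hr hi lam A hA z,
    prod_db'_decomp be hr lam A hA huni z]
  linear_combination (db be c (z (Fin.castLE hr A)) i *
    (∏ j ∈ Finset.univ.erase A, db be c (z (Fin.castLE hr j)) (lam j)) *
    Phi be z r hr) * key2 be (z (Fin.castLE hr A)) (c (i + 1)) h1b

lemma termB (hi : 1 ≤ i)
    (hswap : ∀ t, c' t = if t = i then c (i + 1) else
      if t = i + 1 then c i else c t)
    (lam : Fin r → ℕ) (A : Fin r) (hA : lam A = i + 1)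
    (huni : ∀ j, j ≠ A → lam j ≠ i + 1) (z : Fin N → F) :
    (∏ j : Fin r, db be c' (z (Fin.castLE hr j)) (lam j)) * Phi be z r hr -
      (∏ j : Fin r, db be c (z (Fin.castLE hr j)) (lam j)) * Phi be z r hr =
      (c (i + 1) - c i) *
        ((1 + be * z (Fin.castLE hr A)) *
          ((∏ j : Fin r, db be c (z (Fin.castLE hr j))
              (if lam j = i + 1 then i else lam j)) * Phi be z r hr)) := by
  rw [prod_db_swap_decomp be hr hi hswap lam A hA huni z,
    prod_db_decomp be hr hi lam A hA z,
    prod_db'_decomp be hr lam A hA huni z]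
  linear_combination (db be c (z (Fin.castLE hr A)) i *
    (∏ j ∈ Finset.univ.erase A, db be c (z (Fin.castLE hr j)) (lam j)) *
    Phi be z r hr) * opdiff be (z (Fin.castLE hr A)) (c i) (c (i + 1))

end TermLemmas
section GQLemmas

variable (be : F) {N r : ℕ} (hr : r ≤ N) {i : ℕ} {c c' : ℕ → F}

lemma adj {lam : Fin r → ℕ} (hstrict : StrictAnti lam)
    {A B : Fin r} (hA : lam A = i + 1) (hB : lam B = i) :
    (B : ℕ) = (A : ℕ) + 1 := by
  have hAB : A < B := by
    rcases lt_trichotomy A B with h | h | h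
    · exact h
    · rw [h, hB] at hA; omega
    · have := hstrict h; omega
  by_contra hne
  have h1 : (A : ℕ) < (B : ℕ) := Fin.lt_def.1 hAB
  have h2 : (A : ℕ) + 1 < (B : ℕ) := by omega
  have hCr : (A : ℕ) + 1 < r := lt_trans h2 B.isLt
  have hc1 : A < (⟨(A : ℕ) + 1, hCr⟩ : Fin r) := by
    rw [Fin.lt_def]; exact Nat.lt_succ_self _
  have hc2 : (⟨(A : ℕ) + 1, hCr⟩ : Fin r) < B := by rw [Fin.lt_def]; exact h2
  have t1 := hstrict hc1
  have t2 := hstrict hc2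
  omega

lemma GQ_caseA (hi : 1 ≤ i)
    (hswap : ∀ t, c' t = if t = i then c (i + 1) else
      if t = i + 1 then c i else c t)
    (lam : Fin r → ℕ) (y : Fin N → F) (hno : ∀ j, lam j ≠ i + 1) :
    GQ be c' y hr lam = GQ be c y hr lam := by
  unfold GQ
  congr 1
  refine Finset.sum_congr rfl fun w _ => ?_
  congr 1
  exact Finset.prod_congr rfl fun j _ => db_swap be hi hswap _ (hno j)

lemma GQ_caseC (hi : 1 ≤ i)
    (hswap : ∀ t, c' t = if t = i then c (i + 1) else
      if t = i + 1 then c i else c t)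
    (lam : Fin r → ℕ) (A : Fin r) (hA : lam A = i + 1)
    (huni : ∀ j, j ≠ A → lam j ≠ i + 1) (y : Fin N → F)
    (h1b : 1 + be * c i ≠ 0) :
    GQ be c' y hr lam -
      (1 + be * om be (c (i + 1)) (c i)) * GQ be c y hr lam =
      om be (c (i + 1)) (c i) *
        GQ be c y hr (fun k => if lam k = i + 1 then i else lam k) := by
  unfold GQ
  have h : (∑ w : Equiv.Perm (Fin N),
        (∏ j : Fin r, db be c' (y (w (Fin.castLE hr j))) (lam j)) *
          Phi be (fun k => y (w k)) r hr) -
      (1 + be * om be (c (i + 1)) (c i)) *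
        ∑ w : Equiv.Perm (Fin N),
          (∏ j : Fin r, db be c (y (w (Fin.castLE hr j))) (lam j)) *
            Phi be (fun k => y (w k)) r hr =
      om be (c (i + 1)) (c i) *
        ∑ w : Equiv.Perm (Fin N),
          (∏ j : Fin r, db be c (y (w (Fin.castLE hr j)))
              (if lam j = i + 1 then i else lam j)) *
            Phi be (fun k => y (w k)) r hr := by
    rw [Finset.mul_sum, Finset.mul_sum, ← Finset.sum_sub_distrib]
    refine Finset.sum_congr rfl fun w _ => ?_
    exact termC be hr hi hswap lam A hA huni (fun k => y (w k)) h1b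
  linear_combination (((N - r).factorial : F))⁻¹ * h

lemma GQ_caseB (hi : 1 ≤ i)
    (hswap : ∀ t, c' t = if t = i then c (i + 1) else
      if t = i + 1 then c i else c t)
    (lam : Fin r → ℕ) (A B : Fin r) (hA : lam A = i + 1)
    (huni : ∀ j, j ≠ A → lam j ≠ i + 1) (hB : lam B = i)
    (hAB : (B : ℕ) = (A : ℕ) + 1) (y : Fin N → F) (h2 : (2 : F) ≠ 0) :
    GQ be c' y hr lam = GQ be c y hr lam := by
  classical
  set lam' : Fin r → ℕ := fun k => if lam k = i + 1 then i else lam k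
    with hlam'
  have hlamAB : lam' A = lam' B := by
    rw [hlam']
    simp only []
    rw [if_pos hA, if_neg (by rw [hB]; omega), hB]
  set τ := Equiv.swap (Fin.castLE hr A) (Fin.castLE hr B) with hτ
  set G : Equiv.Perm (Fin N) → F := fun w =>
    (1 + be * y (w (Fin.castLE hr A))) *
      ((∏ j : Fin r, db be c (y (w (Fin.castLE hr j))) (lam' j)) *
        Phi be (fun k => y (w k)) r hr) with hGdef
  have hpair : ∀ w : Equiv.Perm (Fin N), G w + G (w * τ) = 0 := fun w =>
    pairG be hr c (fun k => y (w k)) lam' A B hAB hlamAB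
  have hrei : (∑ w : Equiv.Perm (Fin N), G (w * τ)) =
      ∑ w : Equiv.Perm (Fin N), G w :=
    Fintype.sum_equiv (Equiv.mulRight τ) _ _ fun w => rfl
  have hzero : (∑ w : Equiv.Perm (Fin N), (G w + G (w * τ))) = 0 :=
    Finset.sum_eq_zero fun w _ => hpair w
  rw [Finset.sum_add_distrib, hrei] at hzero
  have hGsum : (∑ w : Equiv.Perm (Fin N), G w) = 0 := by
    have h22 : (2 : F) * ∑ w : Equiv.Perm (Fin N), G w = 0 := by
      linear_combination hzero
    rcases mul_eq_zero.1 h22 with h | h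
    · exact absurd h h2
    · exact h
  unfold GQ
  congr 1
  have hdiff : ∀ w : Equiv.Perm (Fin N),
      (∏ j : Fin r, db be c' (y (w (Fin.castLE hr j))) (lam j)) *
          Phi be (fun k => y (w k)) r hr -
        (∏ j : Fin r, db be c (y (w (Fin.castLE hr j))) (lam j)) *
          Phi be (fun k => y (w k)) r hr =
      (c (i + 1) - c i) * G w := fun w =>
    termB be hr hi hswap lam A hA huni (fun k => y (w k))
  have hfin : (∑ w : Equiv.Perm (Fin N),
        (∏ j : Fin r, db be c' (y (w (Fin.castLE hr j))) (lam j)) *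
          Phi be (fun k => y (w k)) r hr) -
      (∑ w : Equiv.Perm (Fin N),
        (∏ j : Fin r, db be c (y (w (Fin.castLE hr j))) (lam j)) *
          Phi be (fun k => y (w k)) r hr) = 0 := by
    rw [← Finset.sum_sub_distrib]
    calc (∑ w : Equiv.Perm (Fin N),
          ((∏ j : Fin r, db be c' (y (w (Fin.castLE hr j))) (lam j)) *
              Phi be (fun k => y (w k)) r hr -
            (∏ j : Fin r, db be c (y (w (Fin.castLE hr j))) (lam j)) *
              Phi be (fun k => y (w k)) r hr))
        = ∑ w : Equiv.Perm (Fin N), (c (i + 1) - c i) * G w :=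
          Finset.sum_congr rfl fun w _ => hdiff w
      _ = (c (i + 1) - c i) * ∑ w : Equiv.Perm (Fin N), G w :=
          (Finset.mul_sum _ _ _).symm
      _ = 0 := by rw [hGsum, mul_zero]
  exact sub_eq_zero.1 hfin

end GQLemmas
section Nonzero

lemma hinjK (n : ℕ) :
    Function.Injective (algebraMap (MvPolynomial (Fin n ⊕ ℕ) ℚ) (K n)) :=
  IsFractionRing.injective _ _

lemma bv_ne (n i : ℕ) (hi : 1 ≤ i) : bv n (i + 1) ≠ bv n i := by
  unfold bv
  rw [if_neg (by omega), if_neg (by omega)]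
  intro h
  have h2 := hinjK n h
  have h3 := MvPolynomial.X_injective h2
  simp only [Sum.inr.injEq] at h3
  omega

lemma one_add_ne (n i : ℕ) (hi : 1 ≤ i) : 1 + bet n * bv n i ≠ 0 := by
  unfold bet bv
  rw [if_neg (by omega)]
  intro h
  have h0 : algebraMap (MvPolynomial (Fin n ⊕ ℕ) ℚ) (K n)
      (1 + MvPolynomial.X (Sum.inr 0) * MvPolynomial.X (Sum.inr i)) = 0 := by
    rw [map_add, map_mul, map_one]; exact h
  have h2 : (1 + MvPolynomial.X (Sum.inr 0) * MvPolynomial.X (Sum.inr i) :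
      MvPolynomial (Fin n ⊕ ℕ) ℚ) = 0 := by
    apply hinjK n
    rw [map_zero]; exact h0
  have h3 := congrArg (MvPolynomial.eval (fun _ => (0 : ℚ))) h2
  simp at h3

lemma e_ne (n i : ℕ) (hi : 1 ≤ i) :
    om (bet n) (bv n (i + 1)) (bv n i) ≠ 0 := by
  unfold om
  exact div_ne_zero (sub_ne_zero.2 (bv_ne n i hi)) (one_add_ne n i hi)

lemma two_ne (n : ℕ) : (2 : K n) ≠ 0 := by
  intro h
  have h2 : ((2 : MvPolynomial (Fin n ⊕ ℕ) ℚ)) = 0 := by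
    apply hinjK n
    rw [map_zero, map_ofNat]; exact h
  have h3 := congrArg (MvPolynomial.eval (fun _ => (0 : ℚ))) h2
  rw [map_ofNat, map_zero] at h3
  norm_num at h3

end Nonzero


theorem statement15 (n : ℕ) (hn : 1 ≤ n) (i : ℕ) (hi : 1 ≤ i)
    (r : ℕ) (hr : r ≤ n) (lam : Fin r → ℕ)
    (hstrict : StrictAnti lam) (hpos : ∀ j, 0 < lam j) :
    ((∃ k, lam k = i + 1) ∧ (∀ k, lam k ≠ i) →
      (GQ (bet n) (bswap n i) (xv n) hr lam -
          (1 + bet n * om (bet n) (bv n (i + 1)) (bv n i)) *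
            GQ (bet n) (bv n) (xv n) hr lam) /
          om (bet n) (bv n (i + 1)) (bv n i)
        = GQ (bet n) (bv n) (xv n) hr
            (fun k => if lam k = i + 1 then i else lam k)) ∧
    (¬((∃ k, lam k = i + 1) ∧ (∀ k, lam k ≠ i)) →
      (GQ (bet n) (bswap n i) (xv n) hr lam -
          (1 + bet n * om (bet n) (bv n (i + 1)) (bv n i)) *
            GQ (bet n) (bv n) (xv n) hr lam) /
          om (bet n) (bv n (i + 1)) (bv n i)
        = -(bet n) * GQ (bet n) (bv n) (xv n) hr lam) := by
  have hswap : ∀ t, bswap n i t = if t = i then bv n (i + 1) else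
      if t = i + 1 then bv n i else bv n t := fun t => rfl
  have he := e_ne n i hi
  constructor
  · rintro ⟨⟨A, hA⟩, hnoti⟩
    have huni : ∀ j, j ≠ A → lam j ≠ i + 1 := fun j hj h =>
      hj (hstrict.injective (h.trans hA.symm))
    have hM := GQ_caseC (bet n) hr hi hswap lam A hA huni (xv n)
      (one_add_ne n i hi)
    rw [hM, mul_comm, mul_div_assoc, div_self he, mul_one]
  · intro hcon
    rcases Classical.em (∃ k, lam k = i + 1) with ⟨A, hA⟩ | hno
    · have hQ : ∃ kB, lam kB = i := by
        by_contra h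
        exact hcon ⟨⟨A, hA⟩, fun k hk => h ⟨k, hk⟩⟩
      obtain ⟨B, hB⟩ := hQ
      have huni : ∀ j, j ≠ A → lam j ≠ i + 1 := fun j hj h =>
        hj (hstrict.injective (h.trans hA.symm))
      have hABpos : (B : ℕ) = (A : ℕ) + 1 := adj hstrict hA hB
      have hGQ := GQ_caseB (bet n) hr hi hswap lam A B hA huni hB hABpos
        (xv n) (two_ne n)
      rw [hGQ, div_eq_iff he]
      ring
    · have hGQ := GQ_caseA (bet n) hr hi hswap lam (xv n)
        (fun j h => hno ⟨j, h⟩)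
      rw [hGQ, div_eq_iff he]
      ring

end Stmt15
end
end

section
/- (Divided difference equation at the node 0) Let λ = (λ_1 > ⋯ > λ_r > 0) be a strict partition of length r ≤ n, and let b' denote the shifted parameter sequence (⊖b_1, b_2, b_3, …). (a) If λ_r = 1, then [ GQ_λ(x_1,…,x_n, b_1 | b') − (1 + β(b_1 ⊕ b_1))·GQ_λ(x_1,…,x_n | b) ] / (b_1 ⊕ b_1) = GQ_{(λ_1,…,λ_{r−1})}(x_1,…,x_n | b). (b) If λ_r ≥ 2, then GQ_λ(x_1,…,x_n, b_1 | b') = GQ_λ(x_1,…,x_n | b). Here GQ_λ(x_1,…,x_n, b_1 | b') means the polynomial GQ_λ in n+1 variables with parameters b' evaluated at x_{n+1} = b_1. -/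
/-!
STATEMENT 16 (Divided difference equation at the node 0):
Let λ = (λ_1 > ⋯ > λ_r > 0) be a strict partition of length r ≤ n, and let
b' = (⊖b_1, b_2, b_3, …). Then, with GQ_λ(x_1,…,x_n,b_1|b') the defining
expression in n+1 variables with parameters b' and last variable x_{n+1} = b_1:
(a) if λ_r = 1, then
 [GQ_λ(x_1,…,x_n,b_1|b') − (1 + β(b_1 ⊕ b_1))·GQ_λ(x_1,…,x_n|b)]/(b_1 ⊕ b_1)
   = GQ_{(λ_1,…,λ_{r−1})}(x_1,…,x_n|b);
(b) if λ_r ≥ 2, then GQ_λ(x_1,…,x_n,b_1|b') = GQ_λ(x_1,…,x_n|b).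
-/

noncomputable section

namespace Stmt16

variable {F : Type} [Field F]

/-- x ⊕ y = x + y + βxy, for a fixed element `be` playing the role of β. -/
def op (be a c : F) : F := a + c + be * a * c

/-- x ⊖ y = (x − y)/(1 + βy). -/
def om (be a c : F) : F := (a - c) / (1 + be * c)

/-- `[x|c]^k = (x ⊕ c 1)(x ⊕ c 2)⋯(x ⊕ c k)`. -/
def fb (be : F) (c : ℕ → F) (xx : F) (k : ℕ) : F :=
  ∏ t ∈ Finset.range k, op be xx (c (t + 1))

/-- `[[x|c]]^k = (x ⊕ x)(x ⊕ c 1)⋯(x ⊕ c (k−1))`. -/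
def db (be : F) (c : ℕ → F) (xx : F) (k : ℕ) : F :=
  ∏ t ∈ Finset.range k, if t = 0 then op be xx xx else op be xx (c t)

/-- `Π_{i=1}^r Π_{j=i+1}^N (y_i ⊕ y_j)/(y_i ⊖ y_j)`. -/
def Phi (be : F) {N : ℕ} (y : Fin N → F) (r : ℕ) (hr : r ≤ N) : F :=
  ∏ i : Fin r, ∏ j ∈ Finset.univ.filter fun j : Fin N => (i : ℕ) < (j : ℕ),
    op be (y (Fin.castLE hr i)) (y j) / om be (y (Fin.castLE hr i)) (y j)

/-- The Hall–Littlewood-type expression defining `GP_λ(y_1,…,y_N | c)`. -/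
def GP (be : F) (c : ℕ → F) {N : ℕ} (y : Fin N → F) {r : ℕ} (hr : r ≤ N)
    (lam : Fin r → ℕ) : F :=
  (((N - r).factorial : F))⁻¹ *
    ∑ w : Equiv.Perm (Fin N),
      (∏ j : Fin r, fb be c (y (w (Fin.castLE hr j))) (lam j)) *
        Phi be (fun k => y (w k)) r hr

/-- The Hall–Littlewood-type expression defining `GQ_λ(y_1,…,y_N | c)`. -/
def GQ (be : F) (c : ℕ → F) {N : ℕ} (y : Fin N → F) {r : ℕ} (hr : r ≤ N)
    (lam : Fin r → ℕ) : F :=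
  (((N - r).factorial : F))⁻¹ *
    ∑ w : Equiv.Perm (Fin N),
      (∏ j : Fin r, db be c (y (w (Fin.castLE hr j))) (lam j)) *
        Phi be (fun k => y (w k)) r hr

/-- Rational function field in the variables x_1,…,x_n (= `Sum.inl i`),
β (= `Sum.inr 0`) and b_1, b_2, … (= `Sum.inr k`, k ≥ 1), over ℚ. -/
abbrev K (n : ℕ) : Type := FractionRing (MvPolynomial (Fin n ⊕ ℕ) ℚ)

def xv (n : ℕ) (i : Fin n) : K n :=
  algebraMap (MvPolynomial (Fin n ⊕ ℕ) ℚ) (K n) (MvPolynomial.X (Sum.inl i))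

def bet (n : ℕ) : K n :=
  algebraMap (MvPolynomial (Fin n ⊕ ℕ) ℚ) (K n) (MvPolynomial.X (Sum.inr 0))

/-- The parameters b_k (k ≥ 1), with the convention b_0 = 0. -/
def bv (n : ℕ) (k : ℕ) : K n :=
  if k = 0 then 0 else
    algebraMap (MvPolynomial (Fin n ⊕ ℕ) ℚ) (K n) (MvPolynomial.X (Sum.inr k))

/-- The shifted parameter sequence b' = (⊖b_1, b_2, b_3, …). -/
def bshift (n : ℕ) : ℕ → K n := fun k =>
  if k = 1 then om (bet n) 0 (bv n 1) else bv n k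

/-- The tuple (x_1,…,x_n,b_1). -/
def xb (n : ℕ) : Fin (n + 1) → K n := fun k =>
  if h : (k : ℕ) < n then xv n ⟨k, h⟩ else bv n 1


/-! ### Generic auxiliary development -/

def qf (be a c : F) : F := op be a c / om be a c

/-- complement of the image of `v` -/
def cmpl {N r : ℕ} (v : Fin r → Fin N) : Finset (Fin N) :=
  (Finset.image v Finset.univ)ᶜ

def eterm (be : F) (c : ℕ → F) {N r : ℕ} (y : Fin N → F) (lam : Fin r → ℕ)
    (v : Fin r → Fin N) : F :=
  ∏ i : Fin r, (db be c (y (v i)) (lam i) *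
    ((∏ j ∈ Finset.Ioi i, qf be (y (v i)) (y (v j))) *
     ∏ k ∈ cmpl v, qf be (y (v i)) (y k)))

lemma mem_cmpl {N r : ℕ} (v : Fin r → Fin N) (k : Fin N) :
    k ∈ cmpl v ↔ ∀ j, v j ≠ k := by
  simp [cmpl]

def injs (r N : ℕ) : Finset (Fin r → Fin N) :=
  Finset.univ.filter Function.Injective

lemma mem_injs {r N : ℕ} (v : Fin r → Fin N) : v ∈ injs r N ↔ Function.Injective v := by
  simp [injs]

lemma card_extend {N r : ℕ} (hr : r ≤ N) (v : Fin r → Fin N) (hv : Function.Injective v) :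
    (Finset.univ.filter (fun w : Equiv.Perm (Fin N) =>
        (fun j => w (Fin.castLE hr j)) = v)).card = (N - r).factorial := by
  classical
  rw [← Fintype.card_subtype]
  have hc : Function.Injective (Fin.castLE hr) := Fin.castLE_injective hr
  let e₀ : (Set.range (Fin.castLE hr)) ≃ (Set.range v) :=
    (Equiv.ofInjective _ hc).symm.trans (Equiv.ofInjective v hv)
  let e1 : {w : Equiv.Perm (Fin N) // (fun j => w (Fin.castLE hr j)) = v}
      ≃ {e : Fin N ≃ Fin N // ∀ x : (Set.range (Fin.castLE hr)), e x = e₀ x} :=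
    Equiv.subtypeEquivRight (by
      intro w
      constructor
      · rintro hw ⟨x, j, rfl⟩
        have : e₀ ⟨Fin.castLE hr j, ⟨j, rfl⟩⟩ = v j := by
          simp [e₀, Equiv.ofInjective_symm_apply]
        rw [this]
        exact congrFun hw j
      · intro h
        funext j
        have := h ⟨Fin.castLE hr j, ⟨j, rfl⟩⟩
        simpa [e₀, Equiv.ofInjective_symm_apply] using this)
  rw [Fintype.card_congr (e1.trans (Equiv.Set.compl e₀))]
  have h1 : Fintype.card ((Set.range (Fin.castLE hr))ᶜ : Set (Fin N)) = N - r := by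
    rw [Fintype.card_compl_set, Set.card_range_of_injective hc, Fintype.card_fin, Fintype.card_fin]
  have h2 : Fintype.card ((Set.range v)ᶜ : Set (Fin N)) = N - r := by
    rw [Fintype.card_compl_set, Set.card_range_of_injective hv, Fintype.card_fin, Fintype.card_fin]
  rw [Fintype.card_equiv (Fintype.equivOfCardEq (h1.trans h2.symm)), h1]

lemma phi_eq {N r : ℕ} (hr : r ≤ N) (be : F) (y : Fin N → F) (w : Equiv.Perm (Fin N)) :
    Phi be (fun k => y (w k)) r hr
      = ∏ i : Fin r,
          ((∏ j ∈ Finset.Ioi i,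
              qf be (y (w (Fin.castLE hr i))) (y (w (Fin.castLE hr j)))) *
            ∏ k ∈ cmpl (fun j => w (Fin.castLE hr j)),
              qf be (y (w (Fin.castLE hr i))) (y k)) := by
  unfold Phi
  refine Finset.prod_congr rfl fun i _ => ?_
  have hsplit : (Finset.univ.filter fun j : Fin N => (i : ℕ) < (j : ℕ)) =
      (Finset.univ.filter fun j : Fin N => (i : ℕ) < (j : ℕ) ∧ (j : ℕ) < r) ∪
        (Finset.univ.filter fun j : Fin N => r ≤ (j : ℕ)) := by
    ext j
    simp only [Finset.mem_filter, Finset.mem_union, Finset.mem_univ, true_and]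
    have := i.isLt
    omega
  have hdisj : Disjoint
      (Finset.univ.filter fun j : Fin N => (i : ℕ) < (j : ℕ) ∧ (j : ℕ) < r)
      (Finset.univ.filter fun j : Fin N => r ≤ (j : ℕ)) := by
    rw [Finset.disjoint_left]
    intro a ha hb
    simp only [Finset.mem_filter, Finset.mem_univ, true_and] at ha hb
    omega
  rw [hsplit, Finset.prod_union hdisj]
  congr 1
  · refine Finset.prod_nbij' (fun j : Fin N => if h : (j : ℕ) < r then (⟨j, h⟩ : Fin r) else i)
      (fun j : Fin r => Fin.castLE hr j) ?_ ?_ ?_ ?_ ?_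
    · intro a ha
      simp only [Finset.mem_filter, Finset.mem_univ, true_and] at ha
      rw [dif_pos ha.2]
      simpa [Finset.mem_Ioi, Fin.lt_def] using ha.1
    · intro b hb
      simp only [Finset.mem_Ioi, Fin.lt_def] at hb
      simp only [Finset.mem_filter, Finset.mem_univ, true_and, Fin.coe_castLE]
      exact ⟨hb, b.isLt⟩
    · intro a ha
      simp only [Finset.mem_filter, Finset.mem_univ, true_and] at ha
      rw [dif_pos ha.2]
      rfl
    · intro b hb
      simp [Fin.ext_iff]
    · intro a ha
      simp only [Finset.mem_filter, Finset.mem_univ, true_and] at ha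
      dsimp only
      rw [dif_pos ha.2]
      rfl
  · refine Finset.prod_nbij' (fun j : Fin N => w j) (fun k : Fin N => w.symm k) ?_ ?_ ?_ ?_ ?_
    · intro a ha
      simp only [Finset.mem_filter, Finset.mem_univ, true_and] at ha
      rw [mem_cmpl]
      intro j hj
      have : (Fin.castLE hr j : Fin N) = a := w.injective hj
      have : ((Fin.castLE hr j : Fin N) : ℕ) = (a : ℕ) := by rw [this]
      simp only [Fin.coe_castLE] at this
      omega
    · intro b hb
      rw [mem_cmpl] at hb
      simp only [Finset.mem_filter, Finset.mem_univ, true_and]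
      by_contra h
      push_neg at h
      have hcast : Fin.castLE hr ⟨((w.symm b : Fin N) : ℕ), h⟩ = w.symm b := Fin.ext rfl
      exact hb ⟨((w.symm b : Fin N) : ℕ), h⟩ (by rw [hcast]; exact w.apply_symm_apply b)
    · intro a _; exact w.symm_apply_apply a
    · intro b _; exact w.apply_symm_apply b
    · intro a _; rfl

lemma GQ_eq_sum {N r : ℕ} (hr : r ≤ N) (be : F) (c : ℕ → F) (y : Fin N → F)
    (lam : Fin r → ℕ) (hfac : ((N - r).factorial : F) ≠ 0) :
    GQ be c y hr lam = ∑ v ∈ injs r N, eterm be c y lam v := by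
  classical
  unfold GQ
  have h1 : ∀ w : Equiv.Perm (Fin N),
      (∏ j : Fin r, db be c (y (w (Fin.castLE hr j))) (lam j)) *
        Phi be (fun k => y (w k)) r hr
        = eterm be c y lam (fun j => w (Fin.castLE hr j)) := by
    intro w
    rw [phi_eq hr be y w, eterm, ← Finset.prod_mul_distrib]
  rw [Finset.sum_congr rfl fun w _ => h1 w]
  have hmaps : ∀ w : Equiv.Perm (Fin N), w ∈ (Finset.univ : Finset (Equiv.Perm (Fin N))) →
      (fun j => w (Fin.castLE hr j)) ∈ injs r N := by
    intro w _
    rw [mem_injs]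
    exact fun a b hab => Fin.castLE_injective hr (w.injective hab)
  rw [← Finset.sum_fiberwise_of_maps_to hmaps
    (fun w => eterm be c y lam (fun j => w (Fin.castLE hr j)))]
  rw [Finset.mul_sum]
  refine Finset.sum_congr rfl fun v hv => ?_
  have : ∑ w ∈ Finset.univ.filter (fun w : Equiv.Perm (Fin N) =>
      (fun j => w (Fin.castLE hr j)) = v), eterm be c y lam (fun j => w (Fin.castLE hr j))
      = ∑ w ∈ Finset.univ.filter (fun w : Equiv.Perm (Fin N) =>
      (fun j => w (Fin.castLE hr j)) = v), eterm be c y lam v := by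
    refine Finset.sum_congr rfl fun w hw => ?_
    rw [(Finset.mem_filter.mp hw).2]
  rw [this, Finset.sum_const, card_extend hr v ((mem_injs v).mp hv), nsmul_eq_mul,
    inv_mul_cancel_left₀ hfac]

lemma pf_lemma {ι : Type} [DecidableEq ι] (C : Finset ι) :
    ∀ (X : ι → F) (Z : F), (∀ s ∈ C, ∀ t ∈ C, s ≠ t → X s ≠ X t) → (∀ s ∈ C, Z ≠ X s) →
    ∏ s ∈ C, (Z * X s - 1) / (Z - X s)
      = ∏ s ∈ C, X s +
        ∑ s ∈ C, (X s * X s - 1) *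
          (∏ t ∈ C.erase s, ((X s * X t - 1) / (X s - X t))) / (Z - X s) := by
  induction C using Finset.induction_on with
  | empty => intro X Z _ _; simp
  | @insert u C hu ih =>
    intro X Z hinj hZ
    have hmem : ∀ s ∈ C, s ∈ insert u C := fun s hs => Finset.mem_insert_of_mem hs
    have humem : u ∈ insert u C := Finset.mem_insert_self u C
    have hZu : Z - X u ≠ 0 := sub_ne_zero.mpr (hZ u humem)
    have hZs : ∀ s ∈ C, Z - X s ≠ 0 := fun s hs => sub_ne_zero.mpr (hZ s (hmem s hs))
    have hune : ∀ s ∈ C, u ≠ s := fun s hs h => hu (h ▸ hs)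
    have hus : ∀ s ∈ C, X u - X s ≠ 0 :=
      fun s hs => sub_ne_zero.mpr (hinj u humem s (hmem s hs) (hune s hs))
    have hsu : ∀ s ∈ C, X s - X u ≠ 0 :=
      fun s hs => sub_ne_zero.mpr (hinj s (hmem s hs) u humem (Ne.symm (hune s hs)))
    have hinj' : ∀ s ∈ C, ∀ t ∈ C, s ≠ t → X s ≠ X t :=
      fun s hs t ht hst => hinj s (hmem s hs) t (hmem t ht) hst
    have ih1 := ih X Z hinj' (fun s hs => hZ s (hmem s hs))
    have ih2 := ih X (X u) hinj' (fun s hs => hinj u humem s (hmem s hs) (hune s hs))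
    rw [Finset.prod_insert hu, Finset.prod_insert hu, Finset.sum_insert hu,
      Finset.erase_insert hu, ih1]
    have hsum1 : ∑ s ∈ C, (X s * X s - 1) *
        (∏ t ∈ (insert u C).erase s, ((X s * X t - 1) / (X s - X t))) / (Z - X s)
        = ∑ s ∈ C, ((X s * X s - 1) *
            (∏ t ∈ C.erase s, ((X s * X t - 1) / (X s - X t))))
            * ((X s * X u - 1) / (X s - X u)) / (Z - X s) := by
      refine Finset.sum_congr rfl fun s hs => ?_
      rw [Finset.erase_insert_of_ne (hune s hs),
        Finset.prod_insert (fun h => hu (Finset.mem_of_mem_erase h))]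
      ring
    rw [hsum1, ih2, ← add_assoc]
    have key2 : (Z * X u - 1) / (Z - X u) * (∏ s ∈ C, X s)
        = X u * ∏ s ∈ C, X s + (X u * X u - 1) * (∏ s ∈ C, X s) / (Z - X u) := by
      field_simp
      ring
    calc (Z * X u - 1) / (Z - X u) * ((∏ s ∈ C, X s) + ∑ s ∈ C,
            (X s * X s - 1) * (∏ t ∈ C.erase s, ((X s * X t - 1) / (X s - X t))) / (Z - X s))
        = X u * ∏ s ∈ C, X s + (X u * X u - 1) * (∏ s ∈ C, X s) / (Z - X u)
            + ∑ s ∈ C, (Z * X u - 1) / (Z - X u) *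
              ((X s * X s - 1) * (∏ t ∈ C.erase s, ((X s * X t - 1) / (X s - X t))) / (Z - X s)) := by
          rw [mul_add, key2, Finset.mul_sum]
      _ = X u * ∏ s ∈ C, X s + (X u * X u - 1) * (∏ s ∈ C, X s) / (Z - X u)
            + ∑ s ∈ C, ((X u * X u - 1) / (Z - X u) *
                ((X s * X s - 1) * (∏ t ∈ C.erase s, ((X s * X t - 1) / (X s - X t))) / (X u - X s))
              + ((X s * X s - 1) * (∏ t ∈ C.erase s, ((X s * X t - 1) / (X s - X t))))
                  * ((X s * X u - 1) / (X s - X u)) / (Z - X s)) := by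
          congr 1
          refine Finset.sum_congr rfl fun s hs => ?_
          have h1 := hZs s hs
          have h2 := hus s hs
          have h3 := hsu s hs
          generalize (∏ t ∈ C.erase s, ((X s * X t - 1) / (X s - X t))) = A
          field_simp
          ring
      _ = X u * ∏ s ∈ C, X s
            + (X u * X u - 1) * ((∏ s ∈ C, X s) + ∑ s ∈ C,
                (X s * X s - 1) * (∏ t ∈ C.erase s, ((X s * X t - 1) / (X s - X t))) / (X u - X s))
                / (Z - X u)
            + ∑ s ∈ C, ((X s * X s - 1) * (∏ t ∈ C.erase s, ((X s * X t - 1) / (X s - X t))))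
                * ((X s * X u - 1) / (X s - X u)) / (Z - X s) := by
          rw [Finset.sum_add_distrib, ← Finset.mul_sum]
          ring

lemma star_X {ι : Type} [DecidableEq ι] (C : Finset ι) (X : ι → F) (B : F)
    (hinj : ∀ s ∈ C, ∀ t ∈ C, s ≠ t → X s ≠ X t)
    (hX0 : ∀ s ∈ C, X s ≠ 0) (hBX : ∀ s ∈ C, B ≠ X s) :
    ∑ s ∈ C, ((X s * X s - 1) * ∏ t ∈ C.erase s, ((X s * X t - 1) / (X s - X t)))
        * (B * ∏ t ∈ C.erase s, X t) / (X s - B)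
      + (∏ s ∈ C, X s) * ∏ s ∈ C, ((B * X s - 1) / (B - X s)) = 1 := by
  have hPne : (∏ s ∈ C, X s) ≠ 0 := Finset.prod_ne_zero_iff.mpr hX0
  have eq1 := pf_lemma C X B hinj hBX
  have eq2 := pf_lemma C X 0 hinj (fun s hs h => hX0 s hs h.symm)
  have hz : ∏ s ∈ C, ((0 : F) * X s - 1) / (0 - X s) = (∏ s ∈ C, X s)⁻¹ := by
    rw [← Finset.prod_inv_distrib]
    refine Finset.prod_congr rfl fun s hs => ?_
    rw [zero_mul, zero_sub, zero_sub, neg_div_neg_eq, one_div]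
  rw [hz] at eq2
  have hS2 : ∑ s ∈ C, (X s * X s - 1) *
      (∏ t ∈ C.erase s, ((X s * X t - 1) / (X s - X t))) / (0 - X s)
      = (∏ s ∈ C, X s)⁻¹ - ∏ s ∈ C, X s := eq_sub_of_add_eq' eq2.symm
  have hS1 : ∑ s ∈ C, (X s * X s - 1) *
      (∏ t ∈ C.erase s, ((X s * X t - 1) / (X s - X t))) / (B - X s)
      = (∏ s ∈ C, ((B * X s - 1) / (B - X s))) - ∏ s ∈ C, X s := eq_sub_of_add_eq' eq1.symm
  have hterm : ∀ s ∈ C,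
      ((X s * X s - 1) * ∏ t ∈ C.erase s, ((X s * X t - 1) / (X s - X t)))
          * (B * ∏ t ∈ C.erase s, X t) / (X s - B)
        = (∏ t ∈ C, X t) *
            (-((X s * X s - 1) * (∏ t ∈ C.erase s, ((X s * X t - 1) / (X s - X t))) / (B - X s)))
          - (∏ t ∈ C, X t) *
            (-((X s * X s - 1) * (∏ t ∈ C.erase s, ((X s * X t - 1) / (X s - X t))) / (0 - X s))) := by
    intro s hs
    rw [← Finset.prod_erase_mul C X hs]
    have h1 : X s - B ≠ 0 := sub_ne_zero.mpr (fun h => hBX s hs h.symm)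
    have h1' : B - X s ≠ 0 := sub_ne_zero.mpr (hBX s hs)
    have h2 : X s ≠ 0 := hX0 s hs
    have h3 : (0:F) - X s ≠ 0 := by rwa [zero_sub, neg_ne_zero]
    generalize (∏ t ∈ C.erase s, ((X s * X t - 1) / (X s - X t))) = A
    field_simp
    ring
  rw [Finset.sum_congr rfl hterm, Finset.sum_sub_distrib, ← Finset.mul_sum, ← Finset.mul_sum,
    Finset.sum_neg_distrib, Finset.sum_neg_distrib, hS1, hS2]
  linear_combination mul_inv_cancel₀ hPne

lemma star_lemma {ι : Type} [DecidableEq ι] (C : Finset ι) (x : ι → F) (b be : F)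
    (hbe : be ≠ 0)
    (hinj : ∀ s ∈ C, ∀ t ∈ C, s ≠ t → x s ≠ x t)
    (h1 : ∀ s ∈ C, 1 + be * x s ≠ 0) (hb1 : 1 + be * b ≠ 0)
    (hxb : ∀ s ∈ C, x s ≠ b) :
    ∑ s ∈ C, op be (x s) (x s) / om be (x s) b * ∏ t ∈ C.erase s, qf be (x s) (x t)
      + ∏ s ∈ C, qf be b (x s) = 1 := by
  have hxne : ∀ s t : ι, x s ≠ x t → (1 + be * x s) ≠ (1 + be * x t) := by
    intro s t hst h
    exact hst (mul_left_cancel₀ hbe (by linear_combination h))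
  have hinj' : ∀ s ∈ C, ∀ t ∈ C, s ≠ t → (fun s => 1 + be * x s) s ≠ (fun s => 1 + be * x s) t :=
    fun s hs t ht hst => hxne s t (hinj s hs t ht hst)
  have hX0 : ∀ s ∈ C, (fun s => 1 + be * x s) s ≠ 0 := fun s hs => h1 s hs
  have hBX : ∀ s ∈ C, (1 + be * b) ≠ (fun s => 1 + be * x s) s := by
    intro s hs h
    exact hxb s hs (mul_left_cancel₀ hbe (by linear_combination -h))
  rw [← star_X C (fun s => 1 + be * x s) (1 + be * b) hinj' hX0 hBX]
  congr 1
  · refine Finset.sum_congr rfl fun s hs => ?_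
    have hq : ∏ t ∈ C.erase s, qf be (x s) (x t)
        = (∏ t ∈ C.erase s, (1 + be * x t)) *
          ∏ t ∈ C.erase s, (((1 + be * x s) * (1 + be * x t) - 1)
            / ((1 + be * x s) - (1 + be * x t))) := by
      rw [← Finset.prod_mul_distrib]
      refine Finset.prod_congr rfl fun t ht => ?_
      have hts : x s ≠ x t :=
        hinj s hs t (Finset.mem_of_mem_erase ht) (Finset.ne_of_mem_erase ht).symm
      have d2 : x s - x t ≠ 0 := sub_ne_zero.mpr hts
      have d3 : (1 + be * x s) - (1 + be * x t) ≠ 0 := sub_ne_zero.mpr (hxne s t hts)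
      unfold qf op om
      rw [div_div_eq_mul_div, mul_div_assoc', div_eq_div_iff d2 d3]
      ring
    have hopom : op be (x s) (x s) / om be (x s) b
        = ((1 + be * x s) * (1 + be * x s) - 1) * (1 + be * b)
            / ((1 + be * x s) - (1 + be * b)) := by
      have d4 : x s - b ≠ 0 := sub_ne_zero.mpr (hxb s hs)
      have d5 : (1 + be * x s) - (1 + be * b) ≠ 0 := sub_ne_zero.mpr (fun h => hBX s hs h.symm)
      unfold op om
      rw [div_div_eq_mul_div, div_eq_div_iff d4 d5]
      ring
    rw [hq, hopom]
    ring
  · rw [← Finset.prod_mul_distrib]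
    refine Finset.prod_congr rfl fun s hs => ?_
    have d2 : b - x s ≠ 0 := sub_ne_zero.mpr (fun h => hxb s hs h.symm)
    have d3 : (1 + be * b) - (1 + be * x s) ≠ 0 := sub_ne_zero.mpr (hBX s hs)
    unfold qf op om
    rw [div_div_eq_mul_div, mul_div_assoc', div_eq_div_iff d2 d3]
    ring

/-! ### Nonvanishing facts in `K n` -/

lemma ne_of_eval_ne {n : ℕ} (p q : MvPolynomial (Fin n ⊕ ℕ) ℚ) (f : Fin n ⊕ ℕ → ℚ)
    (h : MvPolynomial.eval f p ≠ MvPolynomial.eval f q) :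
    algebraMap (MvPolynomial (Fin n ⊕ ℕ) ℚ) (K n) p
      ≠ algebraMap (MvPolynomial (Fin n ⊕ ℕ) ℚ) (K n) q := by
  intro hh
  exact h (congrArg (MvPolynomial.eval f)
    (IsFractionRing.injective (MvPolynomial (Fin n ⊕ ℕ) ℚ) (K n) hh))

lemma bet_ne_zero (n : ℕ) : bet n ≠ 0 := by
  have h := ne_of_eval_ne (n := n) (MvPolynomial.X (Sum.inr 0)) 0 (fun _ => 1) (by simp)
  simpa [bet] using h

lemma one_add_bet_bv_ne (n : ℕ) : (1 : K n) + bet n * bv n 1 ≠ 0 := by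
  have h := ne_of_eval_ne (n := n)
    (1 + MvPolynomial.X (Sum.inr 0) * MvPolynomial.X (Sum.inr 1)) 0 (fun _ => 1) (by simp)
  simpa [bet, bv] using h

lemma one_add_bet_xv_ne (n : ℕ) (i : Fin n) : (1 : K n) + bet n * xv n i ≠ 0 := by
  have h := ne_of_eval_ne (n := n)
    (1 + MvPolynomial.X (Sum.inr 0) * MvPolynomial.X (Sum.inl i)) 0 (fun _ => 1) (by simp)
  simpa [bet, xv] using h

lemma xv_ne_xv (n : ℕ) {i j : Fin n} (hij : i ≠ j) : xv n i ≠ xv n j := by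
  have h := ne_of_eval_ne (n := n) (MvPolynomial.X (Sum.inl i)) (MvPolynomial.X (Sum.inl j))
    (fun s => if s = Sum.inl i then 1 else 0) (by simp [Ne.symm hij, (Sum.inl_injective.ne_iff).mpr hij])
  simpa [xv] using h

lemma xv_ne_bv (n : ℕ) (i : Fin n) : xv n i ≠ bv n 1 := by
  have h := ne_of_eval_ne (n := n) (MvPolynomial.X (Sum.inl i)) (MvPolynomial.X (Sum.inr 1))
    (fun s => if s = Sum.inl i then 1 else 0) (by simp)
  simpa [xv, bv] using h

lemma op_bv_bv_ne (n : ℕ) : op (bet n) (bv n 1) (bv n 1) ≠ 0 := by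
  have h := ne_of_eval_ne (n := n)
    (MvPolynomial.X (Sum.inr 1) + MvPolynomial.X (Sum.inr 1)
      + MvPolynomial.X (Sum.inr 0) * MvPolynomial.X (Sum.inr 1) * MvPolynomial.X (Sum.inr 1))
    0 (fun _ => 1) (by simp; norm_num)
  unfold op
  simpa [bet, bv] using h

lemma op_xv_bv_ne (n : ℕ) (i : Fin n) : op (bet n) (xv n i) (bv n 1) ≠ 0 := by
  have h := ne_of_eval_ne (n := n)
    (MvPolynomial.X (Sum.inl i) + MvPolynomial.X (Sum.inr 1)
      + MvPolynomial.X (Sum.inr 0) * MvPolynomial.X (Sum.inl i) * MvPolynomial.X (Sum.inr 1))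
    0 (fun _ => 1) (by simp; norm_num)
  unfold op
  simpa [bet, xv, bv] using h

lemma om_xv_bv_ne (n : ℕ) (i : Fin n) : om (bet n) (xv n i) (bv n 1) ≠ 0 := by
  unfold om
  exact div_ne_zero (sub_ne_zero.mpr (xv_ne_bv n i)) (one_add_bet_bv_ne n)

lemma charZero_K (n : ℕ) : CharZero (K n) :=
  charZero_of_injective_algebraMap
    (IsFractionRing.injective (MvPolynomial (Fin n ⊕ ℕ) ℚ) (K n))

lemma fac_ne_zero (n m : ℕ) : ((m.factorial : K n)) ≠ 0 := by
  haveI := charZero_K n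
  exact Nat.cast_ne_zero.mpr (Nat.factorial_ne_zero m)

/-! ### db lemmas and structural Fin/cmpl lemmas -/

lemma db_one (be : F) (c : ℕ → F) (x : F) : db be c x 1 = op be x x := by
  simp [db]

lemma db_split (be : F) (c : ℕ → F) (x : F) {k : ℕ} (hk : 2 ≤ k) :
    db be c x k = op be x x * op be x (c 1) * ∏ t ∈ Finset.Ico 2 k, op be x (c t) := by
  unfold db
  have h : Finset.range k = insert 0 (insert 1 (Finset.Ico 2 k)) := by
    ext t
    simp only [Finset.mem_Ico, Finset.mem_range, Finset.mem_insert]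
    omega
  rw [h, Finset.prod_insert (by simp), Finset.prod_insert (by simp)]
  rw [if_pos rfl, if_neg one_ne_zero, ← mul_assoc]
  congr 1
  exact Finset.prod_congr rfl fun t ht =>
    if_neg (by simp only [Finset.mem_Ico] at ht; omega)

lemma bshift_op_zero (n : ℕ) : op (bet n) (bv n 1) (bshift n 1) = 0 := by
  unfold bshift op om
  rw [if_pos rfl]
  have h := one_add_bet_bv_ne n
  have hq : (0 - bv n 1) / (1 + bet n * bv n 1) * (1 + bet n * bv n 1) = 0 - bv n 1 :=
    div_mul_cancel₀ _ h
  linear_combination hq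

lemma db_bshift_bv_eq_zero (n : ℕ) {k : ℕ} (hk : 2 ≤ k) :
    db (bet n) (bshift n) (bv n 1) k = 0 := by
  rw [db_split _ _ _ hk, bshift_op_zero, mul_zero, zero_mul]

lemma op_om_shift (n : ℕ) (x : K n) :
    op (bet n) x (bshift n 1) = om (bet n) x (bv n 1) := by
  unfold bshift op om
  rw [if_pos rfl]
  have h := one_add_bet_bv_ne n
  have hq : (0 - bv n 1) / (1 + bet n * bv n 1) * (1 + bet n * bv n 1) = 0 - bv n 1 :=
    div_mul_cancel₀ _ h
  rw [eq_div_iff h]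
  linear_combination (1 + bet n * x) * hq

lemma db_bshift_mul (n : ℕ) (x : K n) {k : ℕ} (hk : 2 ≤ k) :
    db (bet n) (bshift n) x k * op (bet n) x (bv n 1)
      = db (bet n) (bv n) x k * om (bet n) x (bv n 1) := by
  rw [db_split _ _ _ hk, db_split _ _ _ hk, op_om_shift]
  have h : ∏ t ∈ Finset.Ico 2 k, op (bet n) x (bshift n t)
      = ∏ t ∈ Finset.Ico 2 k, op (bet n) x (bv n t) := by
    refine Finset.prod_congr rfl fun t ht => ?_
    have : t ≠ 1 := by simp only [Finset.mem_Ico] at ht; omega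
    rw [bshift, if_neg this]
  rw [h]
  ring

lemma db_qf_cancel (n : ℕ) (i : Fin n) {k : ℕ} (hk : 2 ≤ k) :
    db (bet n) (bshift n) (xv n i) k * qf (bet n) (xv n i) (bv n 1)
      = db (bet n) (bv n) (xv n i) k := by
  unfold qf
  rw [mul_div_assoc', db_bshift_mul n _ hk,
    mul_div_cancel_right₀ _ (om_xv_bv_ne n i)]

lemma xb_castSucc (n : ℕ) (j : Fin n) : xb n (Fin.castSucc j) = xv n j := by
  unfold xb
  rw [dif_pos (by simpa using j.isLt)]
  rfl

lemma xb_last (n : ℕ) : xb n (Fin.last n) = bv n 1 := by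
  unfold xb
  rw [dif_neg (by simp)]

lemma cmpl_castSucc {n r : ℕ} (v : Fin r → Fin n) :
    cmpl (fun j => Fin.castSucc (v j))
      = insert (Fin.last n) (Finset.image Fin.castSucc (cmpl v)) := by
  ext k
  simp only [Finset.mem_insert, Finset.mem_image]
  rw [mem_cmpl]
  constructor
  · intro h
    rcases Fin.eq_castSucc_or_eq_last k with ⟨k', rfl⟩ | rfl
    · right
      exact ⟨k', (mem_cmpl _ _).mpr (fun j hj => h j (by rw [hj])), rfl⟩
    · left; rfl
  · rintro (rfl | ⟨k', hk', rfl⟩) <;> intro j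
    · exact (Fin.castSucc_lt_last (v j)).ne
    · intro h
      exact ((mem_cmpl v k').mp hk') j (Fin.castSucc_injective n h)

lemma Ioi_castSucc_finset {m : ℕ} (i : Fin m) :
    Finset.Ioi (Fin.castSucc i)
      = insert (Fin.last m) (Finset.image Fin.castSucc (Finset.Ioi i)) := by
  ext k
  simp only [Finset.mem_Ioi, Finset.mem_insert, Finset.mem_image]
  constructor
  · intro h
    rcases Fin.eq_castSucc_or_eq_last k with ⟨k', rfl⟩ | rfl
    · right; exact ⟨k', Fin.castSucc_lt_castSucc_iff.mp h, rfl⟩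
    · left; rfl
  · rintro (rfl | ⟨k', hk', rfl⟩)
    · exact Fin.castSucc_lt_last i
    · exact Fin.castSucc_lt_castSucc_iff.mpr hk'

lemma Ioi_last_empty {m : ℕ} : Finset.Ioi (Fin.last m) = (∅ : Finset (Fin (m+1))) := by
  ext k
  simp only [Finset.mem_Ioi, Finset.notMem_empty, iff_false, not_lt]
  exact Fin.le_last k

lemma last_not_mem_image_castSucc {n : ℕ} (S : Finset (Fin n)) :
    Fin.last n ∉ Finset.image Fin.castSucc S := by
  simp only [Finset.mem_image, not_exists, not_and]
  intro k _
  exact (Fin.castSucc_lt_last k).ne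

lemma eterm_cast (n r : ℕ) (lam : Fin r → ℕ) (hlam : ∀ j, 1 ≤ lam j) (v : Fin r → Fin n) :
    eterm (bet n) (bshift n) (xb n) lam (fun j => Fin.castSucc (v j))
      = ∏ i : Fin r, (db (bet n) (bv n) (xv n (v i)) (lam i) *
          ((∏ j ∈ Finset.Ioi i, qf (bet n) (xv n (v i)) (xv n (v j))) *
           ∏ k ∈ cmpl v, qf (bet n) (xv n (v i)) (xv n k))
          * (if lam i = 1 then qf (bet n) (xv n (v i)) (bv n 1) else 1)) := by
  unfold eterm
  refine Finset.prod_congr rfl fun i _ => ?_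
  rw [xb_castSucc]
  have hslot : ∀ j ∈ Finset.Ioi i,
      qf (bet n) (xv n (v i)) (xb n (Fin.castSucc (v j)))
        = qf (bet n) (xv n (v i)) (xv n (v j)) := fun j _ => by rw [xb_castSucc]
  rw [Finset.prod_congr rfl hslot]
  rw [cmpl_castSucc v, Finset.prod_insert (last_not_mem_image_castSucc _), xb_last,
    Finset.prod_image (fun a _ b _ h => Fin.castSucc_injective n h)]
  have hc : ∀ k ∈ cmpl v,
      qf (bet n) (xv n (v i)) (xb n (Fin.castSucc k))
        = qf (bet n) (xv n (v i)) (xv n k) := fun k _ => by rw [xb_castSucc]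
  rw [Finset.prod_congr rfl hc]
  rcases eq_or_lt_of_le (hlam i) with h1 | h2
  · rw [if_pos h1.symm, ← h1, db_one, db_one]
    ring
  · rw [if_neg (by omega), ← db_qf_cancel n (v i) h2]
    ring

lemma down_eq {n : ℕ} (hn : 0 < n) (k : Fin (n+1)) (hk : k ≠ Fin.last n) :
    Fin.castSucc (if h : (k : ℕ) < n then (⟨k, h⟩ : Fin n) else ⟨0, hn⟩) = k := by
  have hlt : (k : ℕ) < n := by
    have := k.isLt
    rcases Nat.lt_or_ge (k : ℕ) n with h | h
    · exact h
    · have hkn : (k : ℕ) = n := by have := k.isLt; omega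
      exact absurd (Fin.ext (by rw [hkn, Fin.val_last])) hk
  rw [dif_pos hlt]
  exact Fin.ext rfl

/-- Case (b) summation lemma. -/
lemma sum_case_b (n r : ℕ) (hn : 0 < n) (lam : Fin r → ℕ) (hlam : ∀ j, 2 ≤ lam j) :
    ∑ v ∈ injs r (n+1), eterm (bet n) (bshift n) (xb n) lam v
      = ∑ v ∈ injs r n, eterm (bet n) (bv n) (xv n) lam v := by
  classical
  rw [← Finset.sum_filter_add_sum_filter_not (injs r (n+1)) (fun v => ∃ j, v j = Fin.last n)]
  have hzero : ∑ v ∈ (injs r (n+1)).filter (fun v => ∃ j, v j = Fin.last n),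
      eterm (bet n) (bshift n) (xb n) lam v = 0 := by
    refine Finset.sum_eq_zero fun v hv => ?_
    obtain ⟨j, hj⟩ := (Finset.mem_filter.mp hv).2
    exact Finset.prod_eq_zero (Finset.mem_univ j)
      (by rw [hj, xb_last, db_bshift_bv_eq_zero n (hlam j), zero_mul])
  rw [hzero, zero_add]
  refine Finset.sum_nbij'
    (i := fun v => fun j => if h : ((v j : ℕ) < n) then (⟨v j, h⟩ : Fin n) else ⟨0, hn⟩)
    (j := fun v' => fun j => Fin.castSucc (v' j)) ?_ ?_ ?_ ?_ ?_
  · intro v hv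
    rw [Finset.mem_filter] at hv
    obtain ⟨hv1, hv2⟩ := hv
    push_neg at hv2
    rw [mem_injs]
    intro a b hab
    dsimp only at hab
    apply (mem_injs v).mp hv1
    rw [← down_eq hn (v a) (hv2 a), ← down_eq hn (v b) (hv2 b)]
    exact congrArg _ hab
  · intro v' hv'
    rw [Finset.mem_filter, mem_injs]
    constructor
    · exact fun a b hab =>
        (mem_injs v').mp hv' ((Fin.castSucc_injective n) hab)
    · push_neg
      exact fun j => (Fin.castSucc_lt_last (v' j)).ne
  · intro v hv
    rw [Finset.mem_filter] at hv
    push_neg at hv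
    funext j
    exact down_eq hn (v j) (hv.2 j)
  · intro v' hv'
    funext j
    have h : ((Fin.castSucc (v' j) : Fin (n+1)) : ℕ) < n := by simpa using (v' j).isLt
    dsimp only
    rw [dif_pos h]
    exact Fin.ext rfl
  · intro v hv
    rw [Finset.mem_filter] at hv
    push_neg at hv
    have hrw : v = fun j => Fin.castSucc
        (if h : ((v j : ℕ) < n) then (⟨v j, h⟩ : Fin n) else ⟨0, hn⟩) := by
      funext j
      exact (down_eq hn (v j) (hv.2 j)).symm
    conv_lhs => rw [hrw]
    rw [eterm_cast n r lam (fun j => by have := hlam j; omega)]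
    unfold eterm
    refine Finset.prod_congr rfl fun i _ => ?_
    rw [if_neg (by have := hlam i; omega), mul_one]

/-! ### Extensions of tuples by one value -/

def ext1 {n m : ℕ} (v : Fin m → Fin n) (s : Fin n) : Fin (m+1) → Fin n :=
  fun j => if h : (j : ℕ) < m then v ⟨j, h⟩ else s

def ext2 {n m : ℕ} (v : Fin m → Fin n) : Fin (m+1) → Fin (n+1) :=
  fun j => if h : (j : ℕ) < m then Fin.castSucc (v ⟨j, h⟩) else Fin.last n

lemma ext1_castSucc {n m : ℕ} (v : Fin m → Fin n) (s : Fin n) (i : Fin m) :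
    ext1 v s (Fin.castSucc i) = v i := by
  unfold ext1
  rw [dif_pos (by simpa using i.isLt)]
  rfl

lemma ext1_last {n m : ℕ} (v : Fin m → Fin n) (s : Fin n) :
    ext1 v s (Fin.last m) = s := by
  unfold ext1
  rw [dif_neg (by simp)]

lemma ext2_castSucc {n m : ℕ} (v : Fin m → Fin n) (i : Fin m) :
    ext2 v (Fin.castSucc i) = Fin.castSucc (v i) := by
  unfold ext2
  rw [dif_pos (by simpa using i.isLt)]
  rfl

lemma ext2_last {n m : ℕ} (v : Fin m → Fin n) :
    ext2 v (Fin.last m) = Fin.last n := by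
  unfold ext2
  rw [dif_neg (by simp)]

lemma cmpl_ext1 {n m : ℕ} (v : Fin m → Fin n) (s : Fin n) (hs : s ∈ cmpl v) :
    cmpl (ext1 v s) = (cmpl v).erase s := by
  ext k
  rw [mem_cmpl, Finset.mem_erase, mem_cmpl]
  constructor
  · intro h
    refine ⟨fun hk => ?_, fun i => ?_⟩
    · exact h (Fin.last m) (by rw [ext1_last, hk])
    · exact fun hk => h (Fin.castSucc i) (by rw [ext1_castSucc, hk])
  · rintro ⟨hks, hall⟩ j
    induction j using Fin.lastCases with
    | last => rw [ext1_last]; exact fun h => hks h.symm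
    | cast i => rw [ext1_castSucc]; exact hall i

lemma cmpl_ext2 {n m : ℕ} (v : Fin m → Fin n) :
    cmpl (ext2 v) = Finset.image Fin.castSucc (cmpl v) := by
  ext k
  rw [mem_cmpl]
  simp only [Finset.mem_image]
  constructor
  · intro h
    induction k using Fin.lastCases with
    | last => exact absurd (ext2_last v) (h (Fin.last m))
    | cast k' =>
      exact ⟨k', (mem_cmpl _ _).mpr (fun i hk => h (Fin.castSucc i)
        (by rw [ext2_castSucc, hk])), rfl⟩
  · rintro ⟨k', hk', rfl⟩ j
    induction j using Fin.lastCases with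
    | last => rw [ext2_last]; exact fun h => (Fin.castSucc_lt_last k').ne h.symm
    | cast i =>
      rw [ext2_castSucc]
      exact fun h => ((mem_cmpl v k').mp hk') i (Fin.castSucc_injective n h)

lemma ext1_inj {n m : ℕ} {v : Fin m → Fin n} {s : Fin n}
    (hv : Function.Injective v) (hs : s ∈ cmpl v) : Function.Injective (ext1 v s) := by
  intro a b hab
  induction a using Fin.lastCases with
  | last =>
    induction b using Fin.lastCases with
    | last => rfl
    | cast b' =>
      rw [ext1_last, ext1_castSucc] at hab
      exact absurd hab.symm ((mem_cmpl v s).mp hs b')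
  | cast a' =>
    induction b using Fin.lastCases with
    | last =>
      rw [ext1_last, ext1_castSucc] at hab
      exact absurd hab ((mem_cmpl v s).mp hs a')
    | cast b' =>
      rw [ext1_castSucc, ext1_castSucc] at hab
      exact congrArg Fin.castSucc (hv hab)

lemma ext2_inj {n m : ℕ} {v : Fin m → Fin n}
    (hv : Function.Injective v) : Function.Injective (ext2 v) := by
  intro a b hab
  induction a using Fin.lastCases with
  | last =>
    induction b using Fin.lastCases with
    | last => rfl
    | cast b' =>
      rw [ext2_last, ext2_castSucc] at hab
      exact absurd hab ((Fin.castSucc_lt_last (v b')).ne).symm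
  | cast a' =>
    induction b using Fin.lastCases with
    | last =>
      rw [ext2_last, ext2_castSucc] at hab
      exact absurd hab (Fin.castSucc_lt_last (v a')).ne
    | cast b' =>
      rw [ext2_castSucc, ext2_castSucc] at hab
      exact congrArg Fin.castSucc (hv (Fin.castSucc_injective n hab))

lemma eterm_factor (n m : ℕ) (lam : Fin (m+1) → ℕ) (v : Fin m → Fin n) (s : Fin n)
    (hs : s ∈ cmpl v) :
    eterm (bet n) (bv n) (xv n) lam (ext1 v s)
      = eterm (bet n) (bv n) (xv n) (fun i => lam (Fin.castSucc i)) v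
        * (db (bet n) (bv n) (xv n s) (lam (Fin.last m))
           * ∏ t ∈ (cmpl v).erase s, qf (bet n) (xv n s) (xv n t)) := by
  unfold eterm
  rw [Fin.prod_univ_castSucc]
  congr 1
  · refine Finset.prod_congr rfl fun i _ => ?_
    dsimp only
    rw [ext1_castSucc, cmpl_ext1 v s hs]
    rw [Ioi_castSucc_finset i, Finset.prod_insert (last_not_mem_image_castSucc _),
      ext1_last, Finset.prod_image (fun a _ b _ h => Fin.castSucc_injective m h)]
    have h1 : ∀ j ∈ Finset.Ioi i, qf (bet n) (xv n (v i)) (xv n (ext1 v s (Fin.castSucc j)))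
        = qf (bet n) (xv n (v i)) (xv n (v j)) := fun j _ => by rw [ext1_castSucc]
    rw [Finset.prod_congr rfl h1, ← Finset.mul_prod_erase (cmpl v) _ hs]
    ring
  · rw [ext1_last, Ioi_last_empty, Finset.prod_empty, one_mul, cmpl_ext1 v s hs]

lemma eterm_lastslot (n m : ℕ) (lam : Fin (m+1) → ℕ) (hlam1 : lam (Fin.last m) = 1)
    (hlam2 : ∀ i : Fin m, 2 ≤ lam (Fin.castSucc i)) (v : Fin m → Fin n) :
    eterm (bet n) (bshift n) (xb n) lam (ext2 v)
      = eterm (bet n) (bv n) (xv n) (fun i => lam (Fin.castSucc i)) v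
        * (op (bet n) (bv n 1) (bv n 1) * ∏ k ∈ cmpl v, qf (bet n) (bv n 1) (xv n k)) := by
  unfold eterm
  rw [Fin.prod_univ_castSucc]
  congr 1
  · refine Finset.prod_congr rfl fun i _ => ?_
    dsimp only
    rw [ext2_castSucc, xb_castSucc, cmpl_ext2 v,
      Finset.prod_image (fun a _ b _ h => Fin.castSucc_injective n h)]
    have hc : ∀ k ∈ cmpl v, qf (bet n) (xv n (v i)) (xb n (Fin.castSucc k))
        = qf (bet n) (xv n (v i)) (xv n k) := fun k _ => by rw [xb_castSucc]
    rw [Finset.prod_congr rfl hc]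
    rw [Ioi_castSucc_finset i, Finset.prod_insert (last_not_mem_image_castSucc _),
      ext2_last, xb_last, Finset.prod_image (fun a _ b _ h => Fin.castSucc_injective m h)]
    have h1 : ∀ j ∈ Finset.Ioi i, qf (bet n) (xv n (v i)) (xb n (ext2 v (Fin.castSucc j)))
        = qf (bet n) (xv n (v i)) (xv n (v j)) := fun j _ => by rw [ext2_castSucc, xb_castSucc]
    rw [Finset.prod_congr rfl h1, ← db_qf_cancel n (v i) (hlam2 i)]
    ring
  · rw [ext2_last, xb_last, hlam1, db_one, Ioi_last_empty, Finset.prod_empty, one_mul,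
      cmpl_ext2 v, Finset.prod_image (fun a _ b _ h => Fin.castSucc_injective n h)]
    have hc : ∀ k ∈ cmpl v, qf (bet n) (bv n 1) (xb n (Fin.castSucc k))
        = qf (bet n) (bv n 1) (xv n k) := fun k _ => by rw [xb_castSucc]
    rw [Finset.prod_congr rfl hc]

lemma regroup (n m : ℕ) (lam : Fin (m+1) → ℕ) (g : Fin n → K n) :
    ∑ v ∈ injs (m+1) n, eterm (bet n) (bv n) (xv n) lam v * g (v (Fin.last m))
      = ∑ v' ∈ injs m n, eterm (bet n) (bv n) (xv n) (fun i => lam (Fin.castSucc i)) v' *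
          ∑ s ∈ cmpl v', (db (bet n) (bv n) (xv n s) (lam (Fin.last m))
            * ∏ t ∈ (cmpl v').erase s, qf (bet n) (xv n s) (xv n t)) * g s := by
  classical
  have hmaps : ∀ v ∈ injs (m+1) n, (fun i : Fin m => v (Fin.castSucc i)) ∈ injs m n := by
    intro v hv
    rw [mem_injs] at hv ⊢
    exact fun a b hab => Fin.castSucc_injective m (hv hab)
  rw [← Finset.sum_fiberwise_of_maps_to hmaps
    (fun v => eterm (bet n) (bv n) (xv n) lam v * g (v (Fin.last m)))]
  refine Finset.sum_congr rfl fun v' hv' => ?_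
  rw [Finset.mul_sum]
  have hlastmem : ∀ v ∈ ((injs (m+1) n).filter
      (fun v => (fun i : Fin m => v (Fin.castSucc i)) = v')), v (Fin.last m) ∈ cmpl v' := by
    intro v hv
    rw [Finset.mem_filter] at hv
    obtain ⟨hv1, hv2⟩ := hv
    rw [mem_cmpl]
    intro i hi
    have h1 : v (Fin.castSucc i) = v (Fin.last m) := by
      rw [← hi]
      exact (congrFun hv2 i)
    exact (Fin.castSucc_lt_last i).ne ((mem_injs v).mp hv1 h1)
  refine Finset.sum_nbij' (i := fun v => v (Fin.last m)) (j := fun s => ext1 v' s)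
    hlastmem ?_ ?_ ?_ ?_
  · intro s hs
    rw [Finset.mem_filter, mem_injs]
    refine ⟨ext1_inj ((mem_injs v').mp hv') hs, ?_⟩
    funext i
    exact ext1_castSucc v' s i
  · intro v hv
    have hv2 := (Finset.mem_filter.mp hv).2
    funext j
    induction j using Fin.lastCases with
    | last => exact ext1_last v' _
    | cast i => rw [ext1_castSucc]; exact (congrFun hv2 i).symm
  · intro s hs
    exact ext1_last v' s
  · intro v hv
    have hveq : v = ext1 v' (v (Fin.last m)) := by
      have hv2 := (Finset.mem_filter.mp hv).2
      funext j
      induction j using Fin.lastCases with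
      | last => rw [ext1_last]
      | cast i => rw [ext1_castSucc]; exact congrFun hv2 i
    conv_lhs => rw [hveq]
    rw [eterm_factor n m lam v' (v (Fin.last m)) (hlastmem v hv), ext1_last]
    ring

lemma sum_case_a (n m : ℕ) (hn : 0 < n) (lam : Fin (m+1) → ℕ) (hlam1 : lam (Fin.last m) = 1)
    (hlam2 : ∀ i : Fin m, 2 ≤ lam (Fin.castSucc i)) :
    ∑ v ∈ injs (m+1) (n+1), eterm (bet n) (bshift n) (xb n) lam v
      = (∑ v ∈ injs (m+1) n, eterm (bet n) (bv n) (xv n) lam v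
          * qf (bet n) (xv n (v (Fin.last m))) (bv n 1))
        + ∑ v' ∈ injs m n, eterm (bet n) (bv n) (xv n) (fun i => lam (Fin.castSucc i)) v'
            * (op (bet n) (bv n 1) (bv n 1) * ∏ k ∈ cmpl v', qf (bet n) (bv n 1) (xv n k)) := by
  classical
  rw [← Finset.sum_filter_add_sum_filter_not (injs (m+1) (n+1))
    (fun v => ∃ j, v j = Fin.last n), add_comm]
  congr 1
  · -- terms avoiding the last variable
    refine Finset.sum_nbij'
      (i := fun v => fun j => if h : ((v j : ℕ) < n) then (⟨v j, h⟩ : Fin n) else ⟨0, hn⟩)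
      (j := fun v' => fun j => Fin.castSucc (v' j)) ?_ ?_ ?_ ?_ ?_
    · intro v hv
      rw [Finset.mem_filter] at hv
      obtain ⟨hv1, hv2⟩ := hv
      push_neg at hv2
      rw [mem_injs]
      intro a b hab
      dsimp only at hab
      apply (mem_injs v).mp hv1
      rw [← down_eq hn (v a) (hv2 a), ← down_eq hn (v b) (hv2 b)]
      exact congrArg _ hab
    · intro v' hv'
      rw [Finset.mem_filter, mem_injs]
      constructor
      · exact fun a b hab => (mem_injs v').mp hv' ((Fin.castSucc_injective n) hab)
      · push_neg
        exact fun j => (Fin.castSucc_lt_last (v' j)).ne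
    · intro v hv
      rw [Finset.mem_filter] at hv
      push_neg at hv
      funext j
      exact down_eq hn (v j) (hv.2 j)
    · intro v' hv'
      funext j
      have h : ((Fin.castSucc (v' j) : Fin (n+1)) : ℕ) < n := by simpa using (v' j).isLt
      dsimp only
      rw [dif_pos h]
      exact Fin.ext rfl
    · intro v hv
      rw [Finset.mem_filter] at hv
      push_neg at hv
      have hrw : v = fun j => Fin.castSucc
          (if h : ((v j : ℕ) < n) then (⟨v j, h⟩ : Fin n) else ⟨0, hn⟩) := by
        funext j
        exact (down_eq hn (v j) (hv.2 j)).symm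
      conv_lhs => rw [hrw]
      rw [eterm_cast n (m+1) lam (fun j => by
        induction j using Fin.lastCases with
        | last => omega
        | cast i => have := hlam2 i; omega)]
      rw [Finset.prod_mul_distrib]
      congr 1
      rw [Fin.prod_univ_castSucc]
      have h1 : ∀ i : Fin m, (if lam (Fin.castSucc i) = 1
          then qf (bet n) (xv n ((if h : ((v (Fin.castSucc i) : ℕ) < n)
            then (⟨v (Fin.castSucc i), h⟩ : Fin n) else ⟨0, hn⟩))) (bv n 1) else 1) = 1 := by
        intro i
        rw [if_neg (by have := hlam2 i; omega)]
      rw [Finset.prod_congr rfl (fun i _ => h1 i), Finset.prod_const_one, one_mul,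
        if_pos hlam1]
  · -- terms containing the last variable
    rw [← Finset.sum_filter_add_sum_filter_not
      (((injs (m+1) (n+1)).filter (fun v => ∃ j, v j = Fin.last n)))
      (fun v => v (Fin.last m) = Fin.last n)]
    have hzero : ∑ v ∈ (((injs (m+1) (n+1)).filter (fun v => ∃ j, v j = Fin.last n)).filter
        (fun v => ¬ v (Fin.last m) = Fin.last n)), eterm (bet n) (bshift n) (xb n) lam v = 0 := by
      refine Finset.sum_eq_zero fun v hv => ?_
      rw [Finset.mem_filter, Finset.mem_filter] at hv
      obtain ⟨⟨hv1, j, hj⟩, hv3⟩ := hv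
      have hjne : j ≠ Fin.last m := fun h => hv3 (h ▸ hj)
      rcases Fin.eq_castSucc_or_eq_last j with ⟨j', rfl⟩ | rfl
      · exact Finset.prod_eq_zero (Finset.mem_univ (Fin.castSucc j'))
          (by rw [hj, xb_last, db_bshift_bv_eq_zero n (hlam2 j'), zero_mul])
      · exact absurd rfl hjne
    rw [hzero, add_zero]
    refine Finset.sum_nbij'
      (i := fun v => fun i : Fin m => if h : ((v (Fin.castSucc i) : ℕ) < n)
        then (⟨v (Fin.castSucc i), h⟩ : Fin n) else ⟨0, hn⟩)
      (j := fun v' => ext2 v') ?_ ?_ ?_ ?_ ?_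
    · intro v hv
      rw [Finset.mem_filter, Finset.mem_filter] at hv
      obtain ⟨⟨hv1, _⟩, hQ⟩ := hv
      have hne : ∀ i : Fin m, v (Fin.castSucc i) ≠ Fin.last n := by
        intro i h
        exact (Fin.castSucc_lt_last i).ne ((mem_injs v).mp hv1 (h.trans hQ.symm))
      rw [mem_injs]
      intro a b hab
      dsimp only at hab
      have := congrArg Fin.castSucc hab
      rw [down_eq hn _ (hne a), down_eq hn _ (hne b)] at this
      exact Fin.castSucc_injective m ((mem_injs v).mp hv1 this)
    · intro v' hv'
      rw [Finset.mem_filter, Finset.mem_filter, mem_injs]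
      refine ⟨⟨ext2_inj ((mem_injs v').mp hv'), ⟨Fin.last m, ext2_last v'⟩⟩, ext2_last v'⟩
    · intro v hv
      rw [Finset.mem_filter, Finset.mem_filter] at hv
      obtain ⟨⟨hv1, _⟩, hQ⟩ := hv
      have hne : ∀ i : Fin m, v (Fin.castSucc i) ≠ Fin.last n := by
        intro i h
        exact (Fin.castSucc_lt_last i).ne ((mem_injs v).mp hv1 (h.trans hQ.symm))
      funext j
      induction j using Fin.lastCases with
      | last => rw [ext2_last]; exact hQ.symm
      | cast i => rw [ext2_castSucc]; exact down_eq hn _ (hne i)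
    · intro v' hv'
      funext i
      rw [ext2_castSucc]
      have h : ((Fin.castSucc (v' i) : Fin (n+1)) : ℕ) < n := by simpa using (v' i).isLt
      rw [dif_pos h]
      exact Fin.ext rfl
    · intro v hv
      rw [Finset.mem_filter, Finset.mem_filter] at hv
      obtain ⟨⟨hv1, _⟩, hQ⟩ := hv
      have hne : ∀ i : Fin m, v (Fin.castSucc i) ≠ Fin.last n := by
        intro i h
        exact (Fin.castSucc_lt_last i).ne ((mem_injs v).mp hv1 (h.trans hQ.symm))
      have hveq : v = ext2 (fun i : Fin m => if h : ((v (Fin.castSucc i) : ℕ) < n)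
          then (⟨v (Fin.castSucc i), h⟩ : Fin n) else ⟨0, hn⟩) := by
        funext j
        induction j using Fin.lastCases with
        | last => rw [ext2_last]; exact hQ
        | cast i => rw [ext2_castSucc]; exact (down_eq hn _ (hne i)).symm
      conv_lhs => rw [hveq]
      rw [eterm_lastslot n m lam hlam1 hlam2]

lemma qdiff (be x b : F) (hb : 1 + be * b ≠ 0) (hxb : x - b ≠ 0) :
    qf be x b - (1 + be * op be b b) = op be b b / om be x b := by
  unfold qf op om
  rw [div_div_eq_mul_div, div_div_eq_mul_div, div_sub' hxb, div_eq_div_iff hxb hxb]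
  ring

lemma bracket (n : ℕ) (C : Finset (Fin n)) :
    ∑ s ∈ C, (op (bet n) (xv n s) (xv n s) * ∏ t ∈ C.erase s, qf (bet n) (xv n s) (xv n t))
        * (qf (bet n) (xv n s) (bv n 1) - (1 + bet n * op (bet n) (bv n 1) (bv n 1)))
      + op (bet n) (bv n 1) (bv n 1) * ∏ k ∈ C, qf (bet n) (bv n 1) (xv n k)
      = op (bet n) (bv n 1) (bv n 1) := by
  have hstar := star_lemma C (xv n) (bv n 1) (bet n) (bet_ne_zero n)
    (fun s _ t _ hst => xv_ne_xv n hst) (fun s _ => one_add_bet_xv_ne n s)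
    (one_add_bet_bv_ne n) (fun s _ => xv_ne_bv n s)
  have hterm : ∀ s ∈ C,
      (op (bet n) (xv n s) (xv n s) * ∏ t ∈ C.erase s, qf (bet n) (xv n s) (xv n t))
        * (qf (bet n) (xv n s) (bv n 1) - (1 + bet n * op (bet n) (bv n 1) (bv n 1)))
      = op (bet n) (bv n 1) (bv n 1) * (op (bet n) (xv n s) (xv n s) / om (bet n) (xv n s) (bv n 1)
          * ∏ t ∈ C.erase s, qf (bet n) (xv n s) (xv n t)) := by
    intro s _
    rw [qdiff (bet n) (xv n s) (bv n 1) (one_add_bet_bv_ne n)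
      (sub_ne_zero.mpr (xv_ne_bv n s))]
    have hom := om_xv_bv_ne n s
    field_simp
  rw [Finset.sum_congr rfl hterm, ← Finset.mul_sum, ← mul_add, hstar, mul_one]

theorem statement16 (n r : ℕ) (hrpos : 0 < r) (hr : r ≤ n) (lam : Fin r → ℕ)
    (hstrict : StrictAnti lam) (hpos : ∀ j, 0 < lam j) :
    (lam ⟨r - 1, by omega⟩ = 1 →
      (GQ (bet n) (bshift n) (xb n) (show r ≤ n + 1 by omega) lam -
          (1 + bet n * op (bet n) (bv n 1) (bv n 1)) *
            GQ (bet n) (bv n) (xv n) hr lam) /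
          op (bet n) (bv n 1) (bv n 1)
        = GQ (bet n) (bv n) (xv n) (show r - 1 ≤ n by omega)
            (fun k : Fin (r - 1) => lam ⟨(k : ℕ), by have := k.isLt; omega⟩)) ∧
    (2 ≤ lam ⟨r - 1, by omega⟩ →
      GQ (bet n) (bshift n) (xb n) (show r ≤ n + 1 by omega) lam
        = GQ (bet n) (bv n) (xv n) hr lam) := by
  have hn : 0 < n := lt_of_lt_of_le hrpos hr
  constructor
  · -- case (a)
    intro hlam1
    obtain ⟨m, rfl⟩ : ∃ m, r = m + 1 := ⟨r - 1, by omega⟩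
    have hlam1' : lam (Fin.last m) = 1 := hlam1
    have hlam2' : ∀ i : Fin m, 2 ≤ lam (Fin.castSucc i) := by
      intro i
      have h := hstrict (Fin.castSucc_lt_last i)
      omega
    rw [div_eq_iff (op_bv_bv_ne n)]
    rw [GQ_eq_sum (show m + 1 ≤ n + 1 by omega) (bet n) (bshift n) (xb n) lam
        (fac_ne_zero n _),
      GQ_eq_sum hr (bet n) (bv n) (xv n) lam (fac_ne_zero n _),
      GQ_eq_sum (show m + 1 - 1 ≤ n by omega) (bet n) (bv n) (xv n)
        (fun k : Fin (m + 1 - 1) => lam ⟨(k : ℕ), by have := k.isLt; omega⟩)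
        (fac_ne_zero n _)]
    rw [sum_case_a n m hn lam hlam1' hlam2']
    rw [show (∑ v' ∈ injs (m + 1 - 1) n, eterm (bet n) (bv n) (xv n)
        (fun k : Fin (m + 1 - 1) => lam ⟨(k : ℕ), by have := k.isLt; omega⟩) v')
        = ∑ v' ∈ injs m n, eterm (bet n) (bv n) (xv n)
            (fun i : Fin m => lam (Fin.castSucc i)) v' from rfl]
    have hsub : (∑ v ∈ injs (m+1) n, eterm (bet n) (bv n) (xv n) lam v
          * qf (bet n) (xv n (v (Fin.last m))) (bv n 1))
        - (1 + bet n * op (bet n) (bv n 1) (bv n 1))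
            * (∑ v ∈ injs (m+1) n, eterm (bet n) (bv n) (xv n) lam v)
        = ∑ v ∈ injs (m+1) n, eterm (bet n) (bv n) (xv n) lam v
            * (qf (bet n) (xv n (v (Fin.last m))) (bv n 1)
               - (1 + bet n * op (bet n) (bv n 1) (bv n 1))) := by
      rw [Finset.mul_sum, ← Finset.sum_sub_distrib]
      exact Finset.sum_congr rfl fun v _ => by ring
    have hre := regroup n m lam (fun s => qf (bet n) (xv n s) (bv n 1)
      - (1 + bet n * op (bet n) (bv n 1) (bv n 1)))
    beta_reduce at hre
    have hbr : ∀ v' : Fin m → Fin n,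
        (∑ s ∈ cmpl v', (db (bet n) (bv n) (xv n s) (lam (Fin.last m))
            * ∏ t ∈ (cmpl v').erase s, qf (bet n) (xv n s) (xv n t))
            * (qf (bet n) (xv n s) (bv n 1)
               - (1 + bet n * op (bet n) (bv n 1) (bv n 1))))
          + op (bet n) (bv n 1) (bv n 1) * ∏ k ∈ cmpl v', qf (bet n) (bv n 1) (xv n k)
          = op (bet n) (bv n 1) (bv n 1) := by
      intro v'
      have hdb : ∀ s ∈ cmpl v', (db (bet n) (bv n) (xv n s) (lam (Fin.last m))
            * ∏ t ∈ (cmpl v').erase s, qf (bet n) (xv n s) (xv n t))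
            * (qf (bet n) (xv n s) (bv n 1)
               - (1 + bet n * op (bet n) (bv n 1) (bv n 1)))
          = (op (bet n) (xv n s) (xv n s)
            * ∏ t ∈ (cmpl v').erase s, qf (bet n) (xv n s) (xv n t))
            * (qf (bet n) (xv n s) (bv n 1)
               - (1 + bet n * op (bet n) (bv n 1) (bv n 1))) := by
        intro s _
        rw [hlam1', db_one]
      rw [Finset.sum_congr rfl hdb]
      exact bracket n (cmpl v')
    have key : (∑ v' ∈ injs m n, eterm (bet n) (bv n) (xv n)
          (fun i : Fin m => lam (Fin.castSucc i)) v' *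
          ∑ s ∈ cmpl v', (db (bet n) (bv n) (xv n s) (lam (Fin.last m))
            * ∏ t ∈ (cmpl v').erase s, qf (bet n) (xv n s) (xv n t))
            * (qf (bet n) (xv n s) (bv n 1)
               - (1 + bet n * op (bet n) (bv n 1) (bv n 1))))
        + ∑ v' ∈ injs m n, eterm (bet n) (bv n) (xv n)
            (fun i : Fin m => lam (Fin.castSucc i)) v'
            * (op (bet n) (bv n 1) (bv n 1)
               * ∏ k ∈ cmpl v', qf (bet n) (bv n 1) (xv n k))
        = (∑ v' ∈ injs m n, eterm (bet n) (bv n) (xv n)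
            (fun i : Fin m => lam (Fin.castSucc i)) v')
            * op (bet n) (bv n 1) (bv n 1) := by
      rw [← Finset.sum_add_distrib, Finset.sum_mul]
      refine Finset.sum_congr rfl fun v' _ => ?_
      rw [← mul_add, hbr v']
    linear_combination hsub + hre + key
  · -- case (b)
    intro hlam2
    have hall : ∀ j, 2 ≤ lam j := by
      intro j
      by_cases h : j = ⟨r - 1, by omega⟩
      · rw [h]; exact hlam2
      · have hlt : j < (⟨r - 1, by omega⟩ : Fin r) := by
          rw [Fin.lt_def]
          have h1 : (j : ℕ) ≠ r - 1 := fun hc => h (Fin.ext hc)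
          have := j.isLt
          simp only []
          omega
        have := hstrict hlt
        omega
    rw [GQ_eq_sum (show r ≤ n + 1 by omega) (bet n) (bshift n) (xb n) lam
        (fac_ne_zero n _),
      GQ_eq_sum hr (bet n) (bv n) (xv n) lam (fac_ne_zero n _)]
    exact sum_case_b n r hn lam hall

end Stmt16
end
end

section
/- (Vanishing property) Let λ, μ be strict partitions of lengths ℓ(λ), ℓ(μ) ≤ n, and let b_μ denote the n-tuple (⊖b_{μ_1}, …, ⊖b_{μ_{ℓ(μ)}}, 0, …, 0). Write λ ⊂ μ if ℓ(λ) ≤ ℓ(μ) and λ_i ≤ μ_i for all i ≤ ℓ(λ). Then: (1) if λ ⊄ μ, the evaluation GQ_λ(b_μ|b) is 0; (2) with r = ℓ(λ), GQ_λ(b_λ|b) = Π_{i=1}^r [ ((⊖b_{λ_i}) ⊕ (⊖b_{λ_i})) · Π_{k ∈ {1,…,λ_i−1} ∖ {λ_{i+1},…,λ_r}} ((⊖b_{λ_i}) ⊕ b_k) · Π_{j=i+1}^r ((⊖b_{λ_i}) ⊕ (⊖b_{λ_j})) ], an identity in the localization R of ℤ[β][b_1,b_2,…] at the multiplicative set generated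 by the elements 1 + βb_i. -/
/-!
STATEMENT 17 (Vanishing property): Let λ, μ be strict partitions of length ≤ n
and b_μ = (⊖b_{μ_1},…,⊖b_{μ_{ℓ(μ)}},0,…,0). Write λ ⊂ μ if ℓ(λ) ≤ ℓ(μ) and
λ_i ≤ μ_i for all i. Then, for the polynomial GQ_λ(x_1,…,x_n|b):
(1) if λ ⊄ μ, then GQ_λ(b_μ|b) = 0;
(2) GQ_λ(b_λ|b) = Π_{i=1}^r [ (⊖b_{λ_i} ⊕ ⊖b_{λ_i}) ·
   Π_{k ∈ {1,…,λ_i−1} ∖ {λ_{i+1},…,λ_r}} (⊖b_{λ_i} ⊕ b_k) ·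
   Π_{j=i+1}^r (⊖b_{λ_i} ⊕ ⊖b_{λ_j}) ],
in the localization R of ℤ[β][b] (realized inside the fraction field of ℚ[β][b]).
The evaluation is performed on the polynomial representative g of GQ_λ(x|b).
-/

noncomputable section

namespace Stmt17

variable {F : Type} [Field F]

/-- x ⊕ y = x + y + βxy. -/
def op (be a c : F) : F := a + c + be * a * c

/-- x ⊖ y = (x − y)/(1 + βy). -/
def om (be a c : F) : F := (a - c) / (1 + be * c)

/-- `[[x|c]]^k = (x ⊕ x)(x ⊕ c 1)⋯(x ⊕ c (k−1))`. -/
def db (be : F) (c : ℕ → F) (xx : F) (k : ℕ) : F :=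
  ∏ t ∈ Finset.range k, if t = 0 then op be xx xx else op be xx (c t)

/-- `Π_{i=1}^r Π_{j=i+1}^N (y_i ⊕ y_j)/(y_i ⊖ y_j)`. -/
def Phi (be : F) {N : ℕ} (y : Fin N → F) (r : ℕ) (hr : r ≤ N) : F :=
  ∏ i : Fin r, ∏ j ∈ Finset.univ.filter fun j : Fin N => (i : ℕ) < (j : ℕ),
    op be (y (Fin.castLE hr i)) (y j) / om be (y (Fin.castLE hr i)) (y j)

/-- The Hall–Littlewood-type expression defining `GQ_λ(y_1,…,y_N | c)`. -/
def GQ (be : F) (c : ℕ → F) {N : ℕ} (y : Fin N → F) {r : ℕ} (hr : r ≤ N)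
    (lam : Fin r → ℕ) : F :=
  (((N - r).factorial : F))⁻¹ *
    ∑ w : Equiv.Perm (Fin N),
      (∏ j : Fin r, db be c (y (w (Fin.castLE hr j))) (lam j)) *
        Phi be (fun k => y (w k)) r hr

/-- The coefficient ring ℚ[β][b_1,b_2,…], with β = X 0 and b_k = X k (k ≥ 1). -/
abbrev A : Type := MvPolynomial ℕ ℚ

/-- Its fraction field. -/
abbrev FA : Type := FractionRing A

/-- The polynomial ring A[x_1,…,x_n]. -/
abbrev PX (n : ℕ) : Type := MvPolynomial (Fin n) A

/-- The field of rational functions in β, the b's and the x's. -/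
abbrev K (n : ℕ) : Type := FractionRing (PX n)

def betK (n : ℕ) : K n := algebraMap (PX n) (K n) (MvPolynomial.C (MvPolynomial.X 0))

def bbK (n : ℕ) (k : ℕ) : K n :=
  algebraMap (PX n) (K n) (MvPolynomial.C (MvPolynomial.X k))

def xvK (n : ℕ) (i : Fin n) : K n := algebraMap (PX n) (K n) (MvPolynomial.X i)

def betF : FA := algebraMap A FA (MvPolynomial.X 0)

def bF (k : ℕ) : FA := algebraMap A FA (MvPolynomial.X k)

/-- ⊖b_k = −b_k/(1+βb_k). -/
def nb (k : ℕ) : FA := om betF 0 (bF k)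

/-- The point b_μ = (⊖b_{μ_1},…,⊖b_{μ_{ℓ(μ)}},0,…,0). -/
def bmu (n : ℕ) (m : List ℕ) : Fin n → FA := fun i =>
  if h : (i : ℕ) < m.length then nb (m.get ⟨i, h⟩) else 0

/-- λ ⊂ μ : ℓ(λ) ≤ ℓ(μ) and λ_i ≤ μ_i for all i. -/
def Sub (l m : List ℕ) : Prop :=
  l.length ≤ m.length ∧
    ∀ (i : ℕ) (hl : i < l.length) (hm : i < m.length), l.get ⟨i, hl⟩ ≤ m.get ⟨i, hm⟩

set_option maxHeartbeats 1600000
set_option synthInstance.maxHeartbeats 400000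

/-! ### Auxiliary machinery -/

open Finset MvPolynomial

section RingLevel

variable {R S : Type*} [CommRing R] [CommRing S]

/-- ring-level `op`. -/
def opR (be a c : R) : R := a + c + be * a * c

/-- ring-level `db`. -/
def dbR (be : R) (c : ℕ → R) (xx : R) (k : ℕ) : R :=
  ∏ t ∈ Finset.range k, if t = 0 then opR be xx xx else opR be xx (c t)

lemma map_opR (f : R →+* S) (be a c : R) : f (opR be a c) = opR (f be) (f a) (f c) := by
  simp [opR]

lemma map_dbR (f : R →+* S) (be : R) (c : ℕ → R) (x : R) (k : ℕ) :
    f (dbR be c x k) = dbR (f be) (fun t => f (c t)) (f x) k := by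
  simp only [dbR, map_prod, apply_ite f, map_opR]

lemma op_eq_opR {F : Type} [Field F] (be a c : F) : op be a c = opR be a c := rfl

lemma db_eq_dbR {F : Type} [Field F] (be : F) (c : ℕ → F) (x : F) (k : ℕ) :
    db be c x k = dbR be c x k := rfl

lemma opR_zero (be a : R) : opR be a 0 = a := by simp [opR]

lemma dbR_zero (be : R) (c : ℕ → R) (k : ℕ) (hk : 1 ≤ k) : dbR be c 0 k = 0 := by
  refine Finset.prod_eq_zero (Finset.mem_range.2 hk) ?_
  simp [opR]

end RingLevel

section FieldLevel

variable {F F' : Type} [Field F] [Field F']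

lemma map_op (f : F →+* F') (be a c : F) : f (op be a c) = op (f be) (f a) (f c) := by
  simp [op]

lemma map_om (f : F →+* F') (be a c : F) : f (om be a c) = om (f be) (f a) (f c) := by
  simp [om, map_div₀]

lemma map_db (f : F →+* F') (be : F) (c : ℕ → F) (x : F) (k : ℕ) :
    f (db be c x k) = db (f be) (fun t => f (c t)) (f x) k := by
  simp only [db, map_prod, apply_ite f, map_op]

lemma map_Phi (f : F →+* F') (be : F) {N : ℕ} (y : Fin N → F) (r : ℕ) (hr : r ≤ N) :
    f (Phi be y r hr) = Phi (f be) (fun k => f (y k)) r hr := by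
  simp only [Phi, map_prod, map_div₀, map_op, map_om]

lemma map_GQ (f : F →+* F') (be : F) (c : ℕ → F) {N : ℕ} (y : Fin N → F) {r : ℕ}
    (hr : r ≤ N) (lam : Fin r → ℕ) :
    f (GQ be c y hr lam) = GQ (f be) (fun t => f (c t)) (fun k => f (y k)) hr lam := by
  simp only [GQ, map_mul, map_inv₀, map_natCast, map_sum, map_prod, map_db, map_Phi]

lemma op_zero' (be a : F) : op be a 0 = a := by simp [op]

lemma om_zero' (be a : F) : om be a 0 = a := by simp [om]

end FieldLevel

/-- The key cancellation step: an identity `ι G = ∑ P/Q` of rational functions can be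
specialized along any ring hom `φ` as long as the denominators stay nonzero. -/
lemma step {B L α : Type*} [CommRing B] [Field L] (ι : B →+* L)
    (hinj : Function.Injective ι) (S : Finset α) (G : B) (P Q : α → B) (φ : B →+* B)
    (hQ : ∀ w ∈ S, ι (Q w) ≠ 0) (hφQ : ∀ w ∈ S, ι (φ (Q w)) ≠ 0)
    (h : ι G = ∑ w ∈ S, ι (P w) / ι (Q w)) :
    ι (φ G) = ∑ w ∈ S, ι (φ (P w)) / ι (φ (Q w)) := by
  classical
  have key : G * ∏ w ∈ S, Q w = ∑ w ∈ S, P w * ∏ w' ∈ S.erase w, Q w' := by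
    apply hinj
    rw [map_mul, map_sum, h, Finset.sum_mul, map_prod]
    refine Finset.sum_congr rfl fun w hw => ?_
    rw [map_mul, map_prod, ← Finset.mul_prod_erase S (fun x => ι (Q x)) hw,
      ← mul_assoc, div_mul_cancel₀ _ (hQ w hw)]
  have key2 := congrArg φ key
  simp only [map_mul, map_sum, map_prod] at key2
  have key3 := congrArg ι key2
  simp only [map_mul, map_sum, map_prod] at key3
  have hD : (∏ w ∈ S, ι (φ (Q w))) ≠ 0 := Finset.prod_ne_zero_iff.2 hφQ
  refine mul_right_cancel₀ hD ?_
  rw [key3, Finset.sum_mul]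
  refine Finset.sum_congr rfl fun w hw => ?_
  rw [← Finset.mul_prod_erase S (fun x => ι (φ (Q x))) hw, ← mul_assoc,
    div_mul_cancel₀ _ (hφQ w hw)]
section AbstractHelpers

variable {R : Type*} [CommRing R] {F : Type} [Field F]

lemma ratio_rep (f : R →+* F) (be a c : R) :
    op (f be) (f a) (f c) / om (f be) (f a) (f c)
      = f (opR be a c * (1 + be * c)) / f (a - c) := by
  rw [om, div_div_eq_mul_div, map_mul, map_sub, map_add, map_one, map_mul, map_opR]
  rfl

lemma db_rep (f : R →+* F) (be : R) (c : ℕ → R) (x : R) (k : ℕ) :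
    db (f be) (fun t => f (c t)) (f x) k = dbR (f be) (fun t => f (c t)) (f x) k := rfl

lemma dbprod_rep {ι : Type*} (f : R →+* F) (S : Finset ι) (be : R) (c : ℕ → R)
    (x : ι → R) (k : ι → ℕ) :
    (∏ j ∈ S, db (f be) (fun t => f (c t)) (f (x j)) (k j))
      = f (∏ j ∈ S, dbR be c (x j) (k j)) := by
  rw [map_prod]
  exact Finset.prod_congr rfl fun j _ => by rw [db_rep, map_dbR]

lemma prod_div_rep {ι : Type*} (f : R →+* F) (S : Finset ι) (N D : ι → R) :
    (∏ j ∈ S, (f (N j) / f (D j))) = f (∏ j ∈ S, N j) / f (∏ j ∈ S, D j) := by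
  rw [Finset.prod_div_distrib, ← map_prod, ← map_prod]

lemma assemble_rep {ι : Type*} (f : R →+* F) (S : Finset ι) (p : R) (N D : ι → R) :
    f p * ∏ i ∈ S, (f (N i) / f (D i)) = f (p * ∏ i ∈ S, N i) / f (∏ i ∈ S, D i) := by
  rw [prod_div_rep, ← mul_div_assoc, ← map_mul]

end AbstractHelpers
section FAfacts

lemma injA : Function.Injective (algebraMap A FA) := IsFractionRing.injective A FA

lemma poly_ne_zero_of_eval {p : A} {f : ℕ → ℚ} (h : MvPolynomial.eval f p ≠ 0) : p ≠ 0 := by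
  intro hp; exact h (by rw [hp, map_zero])

lemma one_add_ne (k : ℕ) : (1 : FA) + betF * bF k ≠ 0 := by
  have : (1 : FA) + betF * bF k = algebraMap A FA (1 + X 0 * X k) := by
    simp [betF, bF]
  rw [this]
  intro h
  have h0 : (1 + X 0 * X k : A) = 0 := injA (by rw [h, map_zero])
  have := congrArg (MvPolynomial.eval (fun _ => (0:ℚ))) h0
  simp at this

lemma bF_ne_zero (k : ℕ) : bF k ≠ 0 := by
  intro h
  have h0 : algebraMap A FA (X k) = algebraMap A FA 0 := by
    rw [map_zero]; simpa [bF] using h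
  exact MvPolynomial.X_ne_zero (R := ℚ) k (injA h0)

lemma bF_injective {k t : ℕ} (h : bF k = bF t) : k = t :=
  MvPolynomial.X_injective (injA h)

lemma nb_eq (k : ℕ) : nb k = -(bF k) / (1 + betF * bF k) := by
  simp [nb, om, zero_sub]

lemma nb_ne_zero (k : ℕ) : nb k ≠ 0 := by
  rw [nb_eq, div_ne_zero_iff]
  exact ⟨neg_ne_zero.2 (bF_ne_zero k), one_add_ne k⟩

lemma op_nb_b (k : ℕ) : op betF (nb k) (bF k) = 0 := by
  have h := one_add_ne k
  have h' : 1 + bF k * betF ≠ 0 := by rw [mul_comm]; exact h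
  rw [nb_eq, op]
  field_simp
  ring

lemma op_nb_bt (k t : ℕ) : op betF (nb k) (bF t) = (bF t - bF k) / (1 + betF * bF k) := by
  have h := one_add_ne k
  have h' : 1 + bF k * betF ≠ 0 := by rw [mul_comm]; exact h
  rw [nb_eq, op]
  field_simp
  ring

lemma op_nb_bt_ne_zero {k t : ℕ} (hkt : k ≠ t) : op betF (nb k) (bF t) ≠ 0 := by
  rw [op_nb_bt, div_ne_zero_iff]
  refine ⟨sub_ne_zero.2 fun h => hkt (bF_injective h).symm, one_add_ne k⟩

lemma nb_injective {k t : ℕ} (h : nb k = nb t) : k = t := by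
  by_contra hkt
  have h1 : op betF (nb k) (bF t) = op betF (nb t) (bF t) := by rw [h]
  rw [op_nb_b] at h1
  exact op_nb_bt_ne_zero hkt h1

lemma one_add_nb (k : ℕ) : 1 + betF * nb k = (1 + betF * bF k)⁻¹ := by
  have h := one_add_ne k
  rw [nb_eq]
  field_simp
  ring

lemma om_nb (a : FA) (k : ℕ) : om betF a (nb k) = op betF a (bF k) := by
  have h := one_add_ne k
  have h' : 1 + bF k * betF ≠ 0 := by rw [mul_comm]; exact h
  rw [om, one_add_nb, div_inv_eq_mul, nb_eq, op]
  field_simp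
  ring

end FAfacts
section Machinery

open scoped Classical

/-- Polynomial ring FA[x_1..x_n]. -/
abbrev BB (n : ℕ) : Type := MvPolynomial (Fin n) FA

/-- Its fraction field. -/
abbrev LL (n : ℕ) : Type := FractionRing (BB n)

def ιB {n : ℕ} : BB n →+* LL n := algebraMap _ _

lemma ιB_inj {n : ℕ} : Function.Injective (ιB (n := n)) := IsFractionRing.injective _ _

def beB (n : ℕ) : BB n := MvPolynomial.C betF

def cBB (n : ℕ) (k : ℕ) : BB n := MvPolynomial.C (bF k)

/-- The stage-`s` partial point: coordinates `< s` are specialized to `v`, others generic. -/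
def uu {n : ℕ} (v : Fin n → FA) (s : ℕ) : Fin n → BB n := fun t =>
  if (t : ℕ) < s then MvPolynomial.C (v t) else MvPolynomial.X t

/-- The stage-`s` specialization hom: `X s ↦ C (v s)`. -/
def fs {n : ℕ} (v : Fin n → FA) (s : ℕ) : BB n →+* BB n :=
  MvPolynomial.eval₂Hom MvPolynomial.C
    (fun t => if (t : ℕ) = s then MvPolynomial.C (v t) else MvPolynomial.X t)

lemma fs_C {n : ℕ} (v : Fin n → FA) (s : ℕ) (a : FA) :
    fs v s (MvPolynomial.C a) = MvPolynomial.C a := by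
  simp [fs]

lemma fs_uu {n : ℕ} (v : Fin n → FA) (s : ℕ) (t : Fin n) :
    fs v s (uu v s t) = uu v (s + 1) t := by
  unfold uu
  by_cases h : (t : ℕ) < s
  · rw [if_pos h, if_pos (Nat.lt_succ_of_lt h), fs_C]
  · rw [if_neg h]
    by_cases h2 : (t : ℕ) = s
    · rw [if_pos (by omega)]
      simp [fs, h2]
    · rw [if_neg (by omega)]
      simp [fs, h2]

lemma uu_eq_zero_iff {n : ℕ} (v : Fin n → FA) (s : ℕ) (t : Fin n) :
    uu v s t = 0 ↔ ((t : ℕ) < s ∧ v t = 0) := by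
  unfold uu
  by_cases h : (t : ℕ) < s
  · simp [h, MvPolynomial.C_eq_zero]
  · simp [h, MvPolynomial.X_ne_zero]

/-- Distinctness of the nonzero coordinates. -/
def GoodPt {n : ℕ} (v : Fin n → FA) : Prop :=
  ∀ t t' : Fin n, t ≠ t' → v t ≠ 0 → v t' ≠ 0 → v t ≠ v t'

lemma uu_ne {n : ℕ} {v : Fin n → FA} (hv : GoodPt v) (s : ℕ) {t t' : Fin n}
    (htt : t ≠ t') (h1 : uu v s t ≠ 0) (h2 : uu v s t' ≠ 0) : uu v s t ≠ uu v s t' := by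
  unfold uu at *
  by_cases h : (t : ℕ) < s <;> by_cases h' : (t' : ℕ) < s
  · rw [if_pos h] at h1 ⊢; rw [if_pos h'] at h2 ⊢
    simp only [ne_eq, MvPolynomial.C_eq_zero] at h1 h2
    intro hC
    exact hv t t' htt h1 h2 (MvPolynomial.C_injective _ _ hC)
  · rw [if_pos h]; rw [if_neg h']
    intro hC
    have := congrArg (MvPolynomial.coeff (Finsupp.single t' 1)) hC
    simp only [MvPolynomial.coeff_C, MvPolynomial.coeff_X] at this
    rw [if_neg (by simp [eq_comm, Finsupp.single_eq_zero, Fin.ext_iff])] at this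
    · exact one_ne_zero this.symm
  · rw [if_neg h]; rw [if_pos h']
    intro hC
    have := congrArg (MvPolynomial.coeff (Finsupp.single t 1)) hC
    simp only [MvPolynomial.coeff_C, MvPolynomial.coeff_X] at this
    rw [if_pos trivial] at this
    rw [if_neg (by simp [eq_comm, Finsupp.single_eq_zero, Fin.ext_iff])] at this
    exact one_ne_zero this
  · rw [if_neg h]; rw [if_neg h']
    intro hC
    exact htt (MvPolynomial.X_injective hC)

end Machinery
section Machinery2

open scoped Classical

variable {n r : ℕ}

lemma ιB_ne_zero {p : BB n} (h : p ≠ 0) : ιB p ≠ 0 :=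
  fun h0 => h (ιB_inj (by rw [h0, map_zero]))

/-- Permutations whose first `r` slots carry nonzero values at stage `s`. -/
def Wf (hr : r ≤ n) (v : Fin n → FA) (s : ℕ) : Finset (Equiv.Perm (Fin n)) :=
  Finset.univ.filter fun w => ∀ i : Fin r,
    ((w (Fin.castLE hr i)) : ℕ) < s → v (w (Fin.castLE hr i)) ≠ 0

lemma mem_Wf {hr : r ≤ n} {v : Fin n → FA} {s : ℕ} {w : Equiv.Perm (Fin n)} :
    w ∈ Wf hr v s ↔ ∀ i : Fin r,
      ((w (Fin.castLE hr i)) : ℕ) < s → v (w (Fin.castLE hr i)) ≠ 0 := by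
  simp [Wf]

lemma slot_ne_zero {hr : r ≤ n} {v : Fin n → FA} {s : ℕ} {w : Equiv.Perm (Fin n)}
    (hw : w ∈ Wf hr v s) (i : Fin r) : uu v s (w (Fin.castLE hr i)) ≠ 0 := by
  intro h0
  obtain ⟨h1, h2⟩ := (uu_eq_zero_iff v s _).1 h0
  exact mem_Wf.1 hw i h1 h2

/-- The stage-`s` term of the permutation sum, as an element of `LL n`. -/
def TermL (hr : r ≤ n) (lam : Fin r → ℕ) (v : Fin n → FA) (s : ℕ)
    (w : Equiv.Perm (Fin n)) : LL n :=
  (∏ j : Fin r, db (ιB (beB n)) (fun k => ιB (cBB n k))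
      (ιB (uu v s (w (Fin.castLE hr j)))) (lam j)) *
    Phi (ιB (beB n)) (fun k => ιB (uu v s (w k))) r hr

/-- Pairs whose second member is not an exact zero at stage `s`. -/
def pairSet (hr : r ≤ n) (v : Fin n → FA) (s : ℕ) (w : Equiv.Perm (Fin n))
    (i : Fin r) : Finset (Fin n) :=
  Finset.univ.filter fun j : Fin n => (i : ℕ) < (j : ℕ) ∧ uu v s (w j) ≠ 0

def numB (hr : r ≤ n) (lam : Fin r → ℕ) (v : Fin n → FA) (s : ℕ)
    (w : Equiv.Perm (Fin n)) : BB n :=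
  (∏ j : Fin r, dbR (beB n) (cBB n) (uu v s (w (Fin.castLE hr j))) (lam j)) *
    ∏ i : Fin r, ∏ j ∈ pairSet hr v s w i,
      opR (beB n) (uu v s (w (Fin.castLE hr i))) (uu v s (w j)) *
        (1 + beB n * uu v s (w j))

def denB (hr : r ≤ n) (v : Fin n → FA) (s : ℕ) (w : Equiv.Perm (Fin n)) : BB n :=
  ∏ i : Fin r, ∏ j ∈ pairSet hr v s w i,
    (uu v s (w (Fin.castLE hr i)) - uu v s (w j))

set_option maxHeartbeats 1000000 in
lemma termRep {hr : r ≤ n} (lam : Fin r → ℕ) {v : Fin n → FA} {s : ℕ}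
    {w : Equiv.Perm (Fin n)} (hw : w ∈ Wf hr v s) :
    TermL hr lam v s w = ιB (numB hr lam v s w) / ιB (denB hr v s w) := by
  classical
  have hsplit : ∀ i : Fin r,
      (∏ j ∈ Finset.univ.filter fun j : Fin n => (i : ℕ) < (j : ℕ),
        op (ιB (beB n)) (ιB (uu v s (w (Fin.castLE hr i)))) (ιB (uu v s (w j))) /
          om (ιB (beB n)) (ιB (uu v s (w (Fin.castLE hr i)))) (ιB (uu v s (w j))))
      = ιB (∏ j ∈ pairSet hr v s w i,
            opR (beB n) (uu v s (w (Fin.castLE hr i))) (uu v s (w j)) *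
              (1 + beB n * uu v s (w j)))
        / ιB (∏ j ∈ pairSet hr v s w i,
            (uu v s (w (Fin.castLE hr i)) - uu v s (w j))) := by
    intro i
    have hane : uu v s (w (Fin.castLE hr i)) ≠ 0 := slot_ne_zero hw i
    have hia : ιB (uu v s (w (Fin.castLE hr i))) ≠ 0 := ιB_ne_zero hane
    rw [← Finset.prod_filter_mul_prod_filter_not
      (Finset.univ.filter fun j : Fin n => (i : ℕ) < (j : ℕ))
      (fun j => uu v s (w j) ≠ 0)]
    have h2 : (∏ j ∈ (Finset.univ.filter fun j : Fin n => (i : ℕ) < (j : ℕ)).filter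
        (fun j => ¬ uu v s (w j) ≠ 0),
        op (ιB (beB n)) (ιB (uu v s (w (Fin.castLE hr i)))) (ιB (uu v s (w j))) /
          om (ιB (beB n)) (ιB (uu v s (w (Fin.castLE hr i)))) (ιB (uu v s (w j)))) = 1 := by
      refine Finset.prod_eq_one fun j hj => ?_
      have hj0 : uu v s (w j) = 0 := not_not.1 (Finset.mem_filter.1 hj).2
      rw [hj0, map_zero, op_zero', om_zero', div_self hia]
    rw [h2, mul_one, Finset.filter_filter]
    have hps : Finset.filter (fun a : Fin n => ((i : ℕ) < (a : ℕ) ∧ uu v s (w a) ≠ 0))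
        Finset.univ = pairSet hr v s w i := by
      unfold pairSet; congr 1
    rw [hps]
    rw [Finset.prod_congr rfl fun j (_ : j ∈ pairSet hr v s w i) =>
      ratio_rep ιB (beB n) (uu v s (w (Fin.castLE hr i))) (uu v s (w j))]
    exact prod_div_rep ιB _ _ _
  rw [TermL, Phi]
  rw [dbprod_rep ιB Finset.univ (beB n) (cBB n)
    (fun j : Fin r => uu v s (w (Fin.castLE hr j))) lam]
  rw [Finset.prod_congr rfl fun i (_ : i ∈ Finset.univ) => hsplit i]
  rw [assemble_rep ιB Finset.univ _
    (fun i : Fin r => ∏ j ∈ pairSet hr v s w i,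
      opR (beB n) (uu v s (w (Fin.castLE hr i))) (uu v s (w j)) * (1 + beB n * uu v s (w j)))
    (fun i : Fin r => ∏ j ∈ pairSet hr v s w i,
      (uu v s (w (Fin.castLE hr i)) - uu v s (w j)))]
  rw [numB, denB]

end Machinery2
section Machinery3

open scoped Classical

variable {n r : ℕ}

lemma cancel_extra {R : Type*} [CommRing R] {F : Type} [Field F] {ι₁ : Type*}
    (f : R →+* F) (S : Finset ι₁) (p : R) (N D E : ι₁ → R)
    (hE : ∀ i ∈ S, f (E i) ≠ 0) :
    f (p * ∏ i ∈ S, (N i * E i)) / f (∏ i ∈ S, (D i * E i))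
      = f (p * ∏ i ∈ S, N i) / f (∏ i ∈ S, D i) := by
  simp only [map_mul, map_prod]
  rw [Finset.prod_mul_distrib, Finset.prod_mul_distrib, ← mul_assoc,
    mul_div_mul_right _ _ (Finset.prod_ne_zero_iff.2 hE)]

lemma mem_pairSet {hr : r ≤ n} {v : Fin n → FA} {s : ℕ} {w : Equiv.Perm (Fin n)}
    {i : Fin r} {j : Fin n} :
    j ∈ pairSet hr v s w i ↔ ((i : ℕ) < (j : ℕ) ∧ uu v s (w j) ≠ 0) := by
  simp [pairSet]

lemma uu_succ_ne_of_ne {v : Fin n → FA} {s : ℕ} {t : Fin n}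
    (h : uu v (s + 1) t ≠ 0) : uu v s t ≠ 0 := by
  intro h0
  obtain ⟨h1, h2⟩ := (uu_eq_zero_iff v s t).1 h0
  exact h ((uu_eq_zero_iff v (s + 1) t).2 ⟨Nat.lt_succ_of_lt h1, h2⟩)

lemma slot_ne_idx {hr : r ≤ n} {w : Equiv.Perm (Fin n)} {i : Fin r} {j : Fin n}
    (hij : (i : ℕ) < (j : ℕ)) : w (Fin.castLE hr i) ≠ w j := by
  intro h
  have := w.injective h
  rw [Fin.ext_iff, Fin.coe_castLE] at this
  omega

lemma denB_ne_zero {hr : r ≤ n} {v : Fin n → FA} (hv : GoodPt v) {s : ℕ}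
    {w : Equiv.Perm (Fin n)} (hw : w ∈ Wf hr v s) : denB hr v s w ≠ 0 := by
  rw [denB]
  rw [Finset.prod_ne_zero_iff]
  intro i _
  rw [Finset.prod_ne_zero_iff]
  intro j hj
  obtain ⟨hij, hju⟩ := mem_pairSet.1 hj
  exact sub_ne_zero.2 (uu_ne hv s (slot_ne_idx hij) (slot_ne_zero hw i) hju)

lemma fs_denB_ne_zero {hr : r ≤ n} {v : Fin n → FA} (hv : GoodPt v) {s : ℕ}
    {w : Equiv.Perm (Fin n)} (hw : w ∈ Wf hr v s) : fs v s (denB hr v s w) ≠ 0 := by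
  rw [denB, map_prod]
  rw [Finset.prod_ne_zero_iff]
  intro i _
  rw [map_prod, Finset.prod_ne_zero_iff]
  intro j hj
  obtain ⟨hij, hju⟩ := mem_pairSet.1 hj
  rw [map_sub, fs_uu, fs_uu]
  have hne : w (Fin.castLE hr i) ≠ w j := slot_ne_idx hij
  by_cases hz1 : uu v (s + 1) (w (Fin.castLE hr i)) = 0 <;>
    by_cases hz2 : uu v (s + 1) (w j) = 0
  · -- both zero: impossible
    exfalso
    obtain ⟨ha1, ha2⟩ := (uu_eq_zero_iff _ _ _).1 hz1
    obtain ⟨hb1, hb2⟩ := (uu_eq_zero_iff _ _ _).1 hz2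
    have hi' : ¬ ((w (Fin.castLE hr i) : ℕ) < s) := fun hlt => mem_Wf.1 hw i hlt ha2
    have hj' : ¬ ((w j : ℕ) < s) := fun hlt =>
      hju ((uu_eq_zero_iff _ _ _).2 ⟨hlt, hb2⟩)
    exact hne (Fin.ext (by omega))
  · rw [hz1, zero_sub, neg_ne_zero]; exact hz2
  · rw [hz2, sub_zero]; exact hz1
  · exact sub_ne_zero.2 (uu_ne hv (s + 1) hne hz1 hz2)

lemma fs_beB (v : Fin n → FA) (s : ℕ) : fs v s (beB n) = beB n := fs_C v s _

lemma fs_cBB (v : Fin n → FA) (s : ℕ) (k : ℕ) : fs v s (cBB n k) = cBB n k := fs_C v s _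

lemma fs_numB (hr : r ≤ n) (lam : Fin r → ℕ) (v : Fin n → FA) (s : ℕ)
    (w : Equiv.Perm (Fin n)) :
    fs v s (numB hr lam v s w)
      = (∏ j : Fin r, dbR (beB n) (cBB n) (uu v (s + 1) (w (Fin.castLE hr j))) (lam j)) *
        ∏ i : Fin r, ∏ j ∈ pairSet hr v s w i,
          opR (beB n) (uu v (s + 1) (w (Fin.castLE hr i))) (uu v (s + 1) (w j)) *
            (1 + beB n * uu v (s + 1) (w j)) := by
  unfold numB
  rw [map_mul, map_prod, map_prod]
  congr 1
  · refine Finset.prod_congr rfl fun j _ => ?_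
    rw [map_dbR, fs_beB, fs_uu]
    congr 1
    funext t
    exact fs_cBB v s t
  · refine Finset.prod_congr rfl fun i _ => ?_
    rw [map_prod]
    refine Finset.prod_congr rfl fun j _ => ?_
    rw [map_mul, map_opR, map_add, map_one, map_mul, fs_beB, fs_uu, fs_uu]

lemma fs_denB_eq (hr : r ≤ n) (v : Fin n → FA) (s : ℕ) (w : Equiv.Perm (Fin n)) :
    fs v s (denB hr v s w)
      = ∏ i : Fin r, ∏ j ∈ pairSet hr v s w i,
          (uu v (s + 1) (w (Fin.castLE hr i)) - uu v (s + 1) (w j)) := by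
  unfold denB
  rw [map_prod]
  refine Finset.prod_congr rfl fun i _ => ?_
  rw [map_prod]
  refine Finset.prod_congr rfl fun j _ => ?_
  rw [map_sub, fs_uu, fs_uu]

lemma fs_numB_bad {hr : r ≤ n} {lam : Fin r → ℕ} (hlam : ∀ j, 1 ≤ lam j)
    {v : Fin n → FA} {s : ℕ} {w : Equiv.Perm (Fin n)} (hw : w ∈ Wf hr v s)
    (hw' : w ∉ Wf hr v (s + 1)) : fs v s (numB hr lam v s w) = 0 := by
  rw [fs_numB]
  have : ∃ i : Fin r, uu v (s + 1) (w (Fin.castLE hr i)) = 0 := by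
    by_contra hc
    push_neg at hc
    refine hw' (mem_Wf.2 fun i hlt hv0 => ?_)
    exact hc i ((uu_eq_zero_iff _ _ _).2 ⟨hlt, hv0⟩)
  obtain ⟨i0, hi0⟩ := this
  rw [Finset.prod_eq_zero (Finset.mem_univ i0) (by rw [hi0]; exact dbR_zero _ _ _ (hlam i0)),
    zero_mul]

lemma pairSet_succ (hr : r ≤ n) (v : Fin n → FA) (s : ℕ) (w : Equiv.Perm (Fin n))
    (i : Fin r) :
    pairSet hr v (s + 1) w i
      = (pairSet hr v s w i).filter (fun j => uu v (s + 1) (w j) ≠ 0) := by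
  unfold pairSet
  rw [Finset.filter_filter]
  apply Finset.filter_congr
  intro j _
  constructor
  · rintro ⟨h1, h2⟩; exact ⟨⟨h1, uu_succ_ne_of_ne h2⟩, h2⟩
  · rintro ⟨⟨h1, _⟩, h2⟩; exact ⟨h1, h2⟩

end Machinery3
section Machinery4

open scoped Classical

variable {n r : ℕ}

lemma good_term {hr : r ≤ n} (lam : Fin r → ℕ) {v : Fin n → FA} {s : ℕ}
    {w : Equiv.Perm (Fin n)} (hw1 : w ∈ Wf hr v (s + 1)) :
    ιB (fs v s (numB hr lam v s w)) / ιB (fs v s (denB hr v s w))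
      = TermL hr lam v (s + 1) w := by
  classical
  rw [fs_numB, fs_denB_eq]
  have hZ : ∀ i : Fin r, ∀ j ∈ (pairSet hr v s w i).filter
      (fun j => ¬ uu v (s + 1) (w j) ≠ 0), uu v (s + 1) (w j) = 0 :=
    fun i j hj => not_not.1 (Finset.mem_filter.1 hj).2
  have hnum : ∀ i : Fin r,
      (∏ j ∈ pairSet hr v s w i,
        opR (beB n) (uu v (s + 1) (w (Fin.castLE hr i))) (uu v (s + 1) (w j)) *
          (1 + beB n * uu v (s + 1) (w j)))
      = (∏ j ∈ pairSet hr v (s + 1) w i,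
          opR (beB n) (uu v (s + 1) (w (Fin.castLE hr i))) (uu v (s + 1) (w j)) *
            (1 + beB n * uu v (s + 1) (w j))) *
        ∏ j ∈ (pairSet hr v s w i).filter (fun j => ¬ uu v (s + 1) (w j) ≠ 0),
          uu v (s + 1) (w (Fin.castLE hr i)) := by
    intro i
    rw [← Finset.prod_filter_mul_prod_filter_not (pairSet hr v s w i)
      (fun j => uu v (s + 1) (w j) ≠ 0), ← pairSet_succ]
    congr 1
    refine Finset.prod_congr rfl fun j hj => ?_
    rw [hZ i j hj, opR_zero, mul_zero, add_zero, mul_one]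
  have hden : ∀ i : Fin r,
      (∏ j ∈ pairSet hr v s w i,
        (uu v (s + 1) (w (Fin.castLE hr i)) - uu v (s + 1) (w j)))
      = (∏ j ∈ pairSet hr v (s + 1) w i,
          (uu v (s + 1) (w (Fin.castLE hr i)) - uu v (s + 1) (w j))) *
        ∏ j ∈ (pairSet hr v s w i).filter (fun j => ¬ uu v (s + 1) (w j) ≠ 0),
          uu v (s + 1) (w (Fin.castLE hr i)) := by
    intro i
    rw [← Finset.prod_filter_mul_prod_filter_not (pairSet hr v s w i)
      (fun j => uu v (s + 1) (w j) ≠ 0), ← pairSet_succ]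
    congr 1
    refine Finset.prod_congr rfl fun j hj => ?_
    rw [hZ i j hj, sub_zero]
  rw [Finset.prod_congr rfl fun i (_ : i ∈ Finset.univ) => hnum i,
    Finset.prod_congr rfl fun i (_ : i ∈ Finset.univ) => hden i]
  rw [cancel_extra ιB Finset.univ
    (∏ j : Fin r, dbR (beB n) (cBB n) (uu v (s + 1) (w (Fin.castLE hr j))) (lam j))
    (fun i : Fin r => ∏ j ∈ pairSet hr v (s + 1) w i,
      opR (beB n) (uu v (s + 1) (w (Fin.castLE hr i))) (uu v (s + 1) (w j)) *
        (1 + beB n * uu v (s + 1) (w j)))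
    (fun i : Fin r => ∏ j ∈ pairSet hr v (s + 1) w i,
      (uu v (s + 1) (w (Fin.castLE hr i)) - uu v (s + 1) (w j)))
    (fun i : Fin r => ∏ j ∈ (pairSet hr v s w i).filter
        (fun j => ¬ uu v (s + 1) (w j) ≠ 0),
      uu v (s + 1) (w (Fin.castLE hr i)))
    (fun i _ => ιB_ne_zero (Finset.prod_ne_zero_iff.2 fun j _ => slot_ne_zero hw1 i))]
  rw [termRep lam hw1, numB, denB]

lemma stage_step {hr : r ≤ n} {lam : Fin r → ℕ} {v : Fin n → FA} (hv : GoodPt v)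
    (hlam : ∀ j, 1 ≤ lam j) (s : ℕ) (G : BB n)
    (h : ιB G = ∑ w ∈ Wf hr v s, TermL hr lam v s w) :
    ιB (fs v s G) = ∑ w ∈ Wf hr v (s + 1), TermL hr lam v (s + 1) w := by
  have h' : ιB G = ∑ w ∈ Wf hr v s, ιB (numB hr lam v s w) / ιB (denB hr v s w) :=
    h.trans (Finset.sum_congr rfl fun w hw => termRep lam hw)
  have h2 := step ιB ιB_inj (Wf hr v s) G (numB hr lam v s) (denB hr v s) (fs v s)
    (fun w hw => ιB_ne_zero (denB_ne_zero hv hw))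
    (fun w hw => ιB_ne_zero (fs_denB_ne_zero hv hw)) h'
  rw [h2]
  have hsub : Wf hr v (s + 1) ⊆ Wf hr v s := fun w hw =>
    mem_Wf.2 fun i hlt => mem_Wf.1 hw i (Nat.lt_succ_of_lt hlt)
  rw [← Finset.sum_subset hsub (fun w hw hw' => by
    rw [fs_numB_bad hlam hw hw', map_zero, zero_div])]
  exact Finset.sum_congr rfl fun w hw => good_term lam hw

/-- The sequence of partial specializations of `G`. -/
def Gseq (v : Fin n → FA) (G : BB n) : ℕ → BB n
  | 0 => G
  | (s + 1) => fs v s (Gseq v G s)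

lemma Gseq_eq (v : Fin n → FA) (G : BB n) (s : ℕ) :
    Gseq v G s = MvPolynomial.eval₂Hom MvPolynomial.C (uu v s) G := by
  induction s with
  | zero =>
    have h : MvPolynomial.eval₂Hom MvPolynomial.C (uu v 0) = RingHom.id (BB n) := by
      apply MvPolynomial.ringHom_ext
      · intro a; simp
      · intro t; simp [uu]
    rw [Gseq, h]; rfl
  | succ s ih =>
    have h : (fs v s).comp (MvPolynomial.eval₂Hom MvPolynomial.C (uu v s))
        = MvPolynomial.eval₂Hom MvPolynomial.C (uu v (s + 1)) := by
      apply MvPolynomial.ringHom_ext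
      · intro a; simp [fs]
      · intro t
        rw [RingHom.comp_apply, MvPolynomial.eval₂Hom_X']
        rw [MvPolynomial.eval₂Hom_X']
        exact fs_uu v s t
    rw [Gseq, ih, ← RingHom.comp_apply, h]

lemma uu_top (v : Fin n → FA) (t : Fin n) : uu v n t = MvPolynomial.C (v t) := by
  rw [uu, if_pos t.isLt]

lemma Gseq_top (v : Fin n → FA) (G : BB n) :
    Gseq v G n = MvPolynomial.C (MvPolynomial.eval v G) := by
  rw [Gseq_eq]
  have h : MvPolynomial.eval₂Hom MvPolynomial.C (uu v n)
      = (MvPolynomial.C (σ := Fin n) (R := FA)).comp (MvPolynomial.eval v) := by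
    apply MvPolynomial.ringHom_ext
    · intro a; simp
    · intro t
      rw [RingHom.comp_apply, MvPolynomial.eval₂Hom_X']
      rw [uu_top]
      simp
  rw [h]; rfl

/-- The final (fully specialized) term, as an element of `FA`. -/
def TermFA (hr : r ≤ n) (lam : Fin r → ℕ) (v : Fin n → FA) (w : Equiv.Perm (Fin n)) : FA :=
  (∏ j : Fin r, db betF bF (v (w (Fin.castLE hr j))) (lam j)) *
    Phi betF (fun k => v (w k)) r hr

def κB (n : ℕ) : FA →+* LL n := (ιB (n := n)).comp MvPolynomial.C

lemma κB_inj {n : ℕ} : Function.Injective (κB n) :=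
  ιB_inj.comp (MvPolynomial.C_injective _ _)

lemma TermL_top (hr : r ≤ n) (lam : Fin r → ℕ) (v : Fin n → FA) (w : Equiv.Perm (Fin n)) :
    TermL hr lam v n w = κB n (TermFA hr lam v w) := by
  rw [TermL, TermFA, map_mul]
  congr 1
  · rw [map_prod]
    refine Finset.prod_congr rfl fun j _ => ?_
    rw [map_db (κB n), uu_top]
    rfl
  · rw [map_Phi (κB n)]
    congr 1
    funext k
    rw [uu_top]
    rfl

/-- Main reduction: the evaluation of `G` at the point `v` is the termwise-specialized sum. -/
lemma reduction {hr : r ≤ n} {lam : Fin r → ℕ} {v : Fin n → FA} (hv : GoodPt v)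
    (hlam : ∀ j, 1 ≤ lam j) (G : BB n)
    (h0 : ιB G = ∑ w ∈ Wf hr v 0, TermL hr lam v 0 w) :
    MvPolynomial.eval v G = ∑ w ∈ Wf hr v n, TermFA hr lam v w := by
  have hind : ∀ s, ιB (Gseq v G s) = ∑ w ∈ Wf hr v s, TermL hr lam v s w := by
    intro s
    induction s with
    | zero => exact h0
    | succ s ih => exact stage_step hv hlam s _ ih
  have hn := hind n
  rw [Gseq_top] at hn
  have hsum : ∑ w ∈ Wf hr v n, TermL hr lam v n w
      = κB n (∑ w ∈ Wf hr v n, TermFA hr lam v w) := by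
    rw [map_sum]
    exact Finset.sum_congr rfl fun w _ => TermL_top hr lam v w
  rw [hsum] at hn
  exact κB_inj hn

end Machinery4
section Transfer

open scoped Classical

variable {n r : ℕ}

/-- Coefficient extension `A[x] → FA[x]`. -/
def mapAF (n : ℕ) : PX n →+* BB n := MvPolynomial.map (algebraMap A FA)

lemma mapAF_inj : Function.Injective (mapAF n) := MvPolynomial.map_injective _ injA

lemma ιB_mapAF_inj : Function.Injective ((ιB (n := n)).comp (mapAF n)) :=
  ιB_inj.comp mapAF_inj

/-- The embedding of the rational function field `K n` into `LL n`. -/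
def ΘK (n : ℕ) : K n →+* LL n := IsFractionRing.lift (ιB_mapAF_inj (n := n))

lemma ΘK_alg (q : PX n) : ΘK n (algebraMap (PX n) (K n) q) = ιB (mapAF n q) :=
  IsFractionRing.lift_algebraMap _ q

lemma ΘK_betK : ΘK n (betK n) = ιB (beB n) := by
  rw [betK, ΘK_alg, mapAF, MvPolynomial.map_C]; rfl

lemma ΘK_bbK (k : ℕ) : ΘK n (bbK n k) = ιB (cBB n k) := by
  rw [bbK, ΘK_alg, mapAF, MvPolynomial.map_C]; rfl

lemma ΘK_xvK (i : Fin n) : ΘK n (xvK n i) = ιB (MvPolynomial.X i) := by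
  rw [xvK, ΘK_alg, mapAF, MvPolynomial.map_X]

lemma uu_zero (v : Fin n → FA) (t : Fin n) : uu v 0 t = MvPolynomial.X t := by
  rw [uu, if_neg (Nat.not_lt_zero _)]

lemma Wf_zero (hr : r ≤ n) (v : Fin n → FA) : Wf hr v 0 = Finset.univ := by
  apply Finset.eq_univ_iff_forall.2
  intro w
  exact mem_Wf.2 fun i hlt => absurd hlt (Nat.not_lt_zero _)

lemma fact_ne_zero_FA (k : ℕ) : ((k.factorial : FA)) ≠ 0 :=
  Nat.cast_ne_zero.2 k.factorial_ne_zero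

lemma fact_ne_zero_LL (k : ℕ) : ((k.factorial : LL n)) ≠ 0 := by
  intro h
  apply fact_ne_zero_FA (k := k)
  apply κB_inj (n := n)
  rw [map_natCast, map_zero, h]

lemma transfer (hr : r ≤ n) (lam : Fin r → ℕ)
    (v : Fin n → FA) (hv : GoodPt v) (hlam : ∀ j, 1 ≤ lam j) (g : PX n)
    (hg : algebraMap (PX n) (K n) g = GQ (betK n) (bbK n) (xvK n) hr lam) :
    ((n - r).factorial : FA) * MvPolynomial.eval₂ (algebraMap A FA) v g
      = ∑ w ∈ Wf hr v n, TermFA hr lam v w := by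
  have h1 := congrArg (ΘK n) hg
  rw [ΘK_alg, map_GQ] at h1
  have h2 : GQ (ΘK n (betK n)) (fun t => ΘK n (bbK n t)) (fun k => ΘK n (xvK n k)) hr lam
      = ((n - r).factorial : LL n)⁻¹ * ∑ w : Equiv.Perm (Fin n), TermL hr lam v 0 w := by
    rw [GQ, ΘK_betK]
    congr 1
    refine Finset.sum_congr rfl fun w _ => ?_
    rw [TermL]
    congr 1
    · refine Finset.prod_congr rfl fun j _ => ?_
      rw [ΘK_xvK, uu_zero]
      congr 1
      funext t
      rw [ΘK_bbK]
    · rw [Phi, Phi]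
      refine Finset.prod_congr rfl fun i _ => Finset.prod_congr rfl fun j _ => ?_
      simp only [ΘK_xvK, uu_zero]
  rw [h2] at h1
  have h0 : ιB (((n - r).factorial : BB n) * mapAF n g)
      = ∑ w ∈ Wf hr v 0, TermL hr lam v 0 w := by
    rw [map_mul, map_natCast, h1, ← mul_assoc,
      mul_inv_cancel₀ (fact_ne_zero_LL (n - r)), one_mul, Wf_zero]
  have hred := reduction hv hlam (((n - r).factorial : BB n) * mapAF n g) h0
  rw [map_mul, map_natCast] at hred
  rw [MvPolynomial.eval₂_eq_eval_map]
  exact hred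

end Transfer
section Combinatorics

open scoped Classical

variable {n r : ℕ}

lemma mem_Wf_top {hr : r ≤ n} {v : Fin n → FA} {w : Equiv.Perm (Fin n)} :
    w ∈ Wf hr v n ↔ ∀ i : Fin r, v (w (Fin.castLE hr i)) ≠ 0 := by
  rw [mem_Wf]
  exact ⟨fun h i => h i (Fin.isLt _), fun h i _ => h i⟩

lemma bmu_pos {m : List ℕ} (t : Fin n) (h : (t : ℕ) < m.length) :
    bmu n m t = nb (m.get ⟨t, h⟩) := by
  rw [bmu, dif_pos h]

lemma bmu_zero {m : List ℕ} (t : Fin n) (h : ¬ (t : ℕ) < m.length) :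
    bmu n m t = 0 := by
  rw [bmu, dif_neg h]

lemma bmu_ne_zero {m : List ℕ} (hmpos : ∀ k ∈ m, 0 < k) (t : Fin n) :
    bmu n m t ≠ 0 ↔ (t : ℕ) < m.length := by
  constructor
  · intro h
    by_contra hc
    exact h (bmu_zero t hc)
  · intro h
    rw [bmu_pos t h]
    exact nb_ne_zero _

lemma get_ne_of_ne {m : List ℕ} (hm : List.Pairwise (· > ·) m) {a b : Fin m.length}
    (hab : a ≠ b) : m.get a ≠ m.get b := by
  rcases lt_or_gt_of_ne (Fin.val_ne_of_ne hab) with h | h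
  · exact ne_of_gt (hm.rel_get_of_lt (by exact h))
  · exact ne_of_lt (hm.rel_get_of_lt (by exact h))

lemma get_le_of_le {m : List ℕ} (hm : List.Pairwise (· > ·) m) {a b : Fin m.length}
    (hab : a ≤ b) : m.get b ≤ m.get a := by
  rcases eq_or_lt_of_le hab with h | h
  · rw [h]
  · exact le_of_lt (hm.rel_get_of_lt h)

lemma bmu_good {m : List ℕ} (hm : List.Pairwise (· > ·) m) (hmpos : ∀ k ∈ m, 0 < k) :
    GoodPt (bmu n m : Fin n → FA) := by
  intro t t' htt h1 h2
  have ht : (t : ℕ) < m.length := (bmu_ne_zero hmpos t).1 h1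
  have ht' : (t' : ℕ) < m.length := (bmu_ne_zero hmpos t').1 h2
  rw [bmu_pos t ht, bmu_pos t' ht']
  intro h
  have := nb_injective h
  exact get_ne_of_ne hm (a := ⟨t, ht⟩) (b := ⟨t', ht'⟩)
    (by simp [Fin.ext_iff]; exact fun hh => htt (Fin.ext hh)) this

/-- vanishing of a `db` factor at `⊖b_k` when `1 ≤ k < K`. -/
lemma db_vanish {k K : ℕ} (hk1 : 1 ≤ k) (hkK : k < K) :
    db betF bF (nb k) K = 0 := by
  rw [db]
  refine Finset.prod_eq_zero (Finset.mem_range.2 hkK) ?_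
  rw [if_neg (by omega)]
  exact op_nb_b k

end Combinatorics
section Part1

open scoped Classical

lemma castLE_slot_inj {n r : ℕ} (hr : r ≤ n) (w : Equiv.Perm (Fin n)) :
    Function.Injective (fun i : Fin r => w (Fin.castLE hr i)) := fun i i' h =>
  Fin.castLE_injective hr (w.injective h)

lemma part1 (n : ℕ) (l m : List ℕ)
    (hl : List.Pairwise (· > ·) l) (hlpos : ∀ k ∈ l, 0 < k) (hln : l.length ≤ n)
    (hm : List.Pairwise (· > ·) m) (hmpos : ∀ k ∈ m, 0 < k) (hmn : m.length ≤ n)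
    (g : PX n)
    (hg : algebraMap (PX n) (K n) g
      = GQ (betK n) (bbK n) (xvK n) hln (fun j => l.get j))
    (hns : ¬ Sub l m) :
    MvPolynomial.eval₂ (algebraMap A FA) (bmu n m) g = 0 := by
  have hlam : ∀ j : Fin l.length, 1 ≤ l.get j := fun j => hlpos _ (l.get_mem j)
  have RED := transfer hln (fun j => l.get j) (bmu n m) (bmu_good hm hmpos) hlam g hg
  have hz : ∑ w ∈ Wf hln (bmu n m) n, TermFA hln (fun j => l.get j) (bmu n m) w = 0 := by
    refine Finset.sum_eq_zero fun w hw => ?_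
    have hslot : ∀ i : Fin l.length, ((w (Fin.castLE hln i)) : ℕ) < m.length :=
      fun i => (bmu_ne_zero hmpos _).1 (mem_Wf_top.1 hw i)
    by_cases hrp : l.length ≤ m.length
    · have hex : ∃ (i₀ : ℕ) (h1 : i₀ < l.length) (h2 : i₀ < m.length),
          m.get ⟨i₀, h2⟩ < l.get ⟨i₀, h1⟩ := by
        by_contra hc
        push_neg at hc
        exact hns ⟨hrp, fun i hl1 hm1 => hc i hl1 hm1⟩
      obtain ⟨i₀, h1, h2, hgt⟩ := hex
      have hex2 : ∃ a : Fin l.length, (a : ℕ) ≤ i₀ ∧ i₀ ≤ ((w (Fin.castLE hln a)) : ℕ) := by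
        by_contra hc
        push_neg at hc
        have h3 : i₀ + 1 ≤ l.length := h1
        have hF : Function.Injective (fun a : Fin (i₀ + 1) =>
            (⟨((w (Fin.castLE hln (Fin.castLE h3 a))) : ℕ), by
              refine hc (Fin.castLE h3 a) ?_
              simp only [Fin.coe_castLE]
              omega⟩ : Fin i₀)) := by
          intro a a' h
          have hv : ((w (Fin.castLE hln (Fin.castLE h3 a))) : ℕ)
              = ((w (Fin.castLE hln (Fin.castLE h3 a'))) : ℕ) := by
            simpa using congrArg Fin.val h
          have h2 : w (Fin.castLE hln (Fin.castLE h3 a))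
              = w (Fin.castLE hln (Fin.castLE h3 a')) := Fin.ext hv
          exact Fin.castLE_injective h3 (castLE_slot_inj hln w h2)
        have hcard := Fintype.card_le_of_injective _ hF
        simp only [Fintype.card_fin] at hcard
        omega
      obtain ⟨a, ha1, ha2⟩ := hex2
      rw [TermFA]
      refine mul_eq_zero_of_left (Finset.prod_eq_zero (Finset.mem_univ a) ?_) _
      rw [bmu_pos _ (hslot a)]
      refine db_vanish (hmpos _ (m.get_mem ⟨_, hslot a⟩)) ?_
      have hk1 : m.get ⟨((w (Fin.castLE hln a)) : ℕ), hslot a⟩ ≤ m.get ⟨i₀, h2⟩ :=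
        get_le_of_le hm (by simp [Fin.le_def]; omega)
      have hk2 : l.get ⟨i₀, h1⟩ ≤ l.get a := get_le_of_le hl (by simp [Fin.le_def]; omega)
      omega
    · exfalso
      have hF : Function.Injective (fun i : Fin l.length =>
          (⟨((w (Fin.castLE hln i)) : ℕ), hslot i⟩ : Fin m.length)) := by
        intro i i' h
        have hv : ((w (Fin.castLE hln i)) : ℕ) = ((w (Fin.castLE hln i')) : ℕ) := by
          simpa using congrArg Fin.val h
        exact castLE_slot_inj hln w (Fin.ext hv : w (Fin.castLE hln i) = w (Fin.castLE hln i'))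
      have hcard := Fintype.card_le_of_injective _ hF
      simp only [Fintype.card_fin] at hcard
      omega
  rw [hz] at RED
  exact (mul_eq_zero.1 RED).resolve_left (fact_ne_zero_FA _)

end Part1
section Part2Helpers

open scoped Classical

variable {n r : ℕ}

lemma db_expand {F : Type} [Field F] (be : F) (c : ℕ → F) (x : F) {k : ℕ} (hk : 1 ≤ k) :
    db be c x k = op be x x * ∏ t ∈ Finset.Icc 1 (k - 1), op be x (c t) := by
  rw [db]
  have hrange : Finset.range k = insert 0 (Finset.Icc 1 (k - 1)) := by
    ext t
    simp only [Finset.mem_range, Finset.mem_insert, Finset.mem_Icc]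
    omega
  rw [hrange, Finset.prod_insert (by simp), if_pos rfl]
  congr 1
  refine Finset.prod_congr rfl fun t ht => ?_
  rw [if_neg (by simp only [Finset.mem_Icc] at ht; omega)]

/-- The set of permutations fixing the first `r` coordinates pointwise. -/
def FixF (hr : r ≤ n) : Finset (Equiv.Perm (Fin n)) :=
  Finset.univ.filter fun w => ∀ i : Fin r, w (Fin.castLE hr i) = Fin.castLE hr i

lemma mem_FixF {hr : r ≤ n} {w : Equiv.Perm (Fin n)} :
    w ∈ FixF hr ↔ ∀ i : Fin r, w (Fin.castLE hr i) = Fin.castLE hr i := by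
  simp [FixF]

lemma fix_low {hr : r ≤ n} {w : Equiv.Perm (Fin n)} (hw : w ∈ FixF hr) {x : Fin n}
    (hx : (x : ℕ) < r) : w x = x := by
  have hx' : x = Fin.castLE hr ⟨(x : ℕ), hx⟩ := Fin.ext rfl
  rw [hx']
  exact mem_FixF.1 hw _

lemma fix_out {hr : r ≤ n} {w : Equiv.Perm (Fin n)} (hw : w ∈ FixF hr) {j : Fin n}
    (hj : ¬ ((j : ℕ) < r)) : ¬ ((w j : ℕ) < r) := by
  intro hcon
  have h1 : w (w j) = w j := fix_low hw hcon
  exact hj (by rwa [w.injective h1] at hcon)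

lemma subtype_iff {hr : r ≤ n} {w : Equiv.Perm (Fin n)} (hw : w ∈ FixF hr) :
    ∀ x : Fin n, r ≤ (x : ℕ) ↔ r ≤ ((w x) : ℕ) := by
  intro x
  constructor
  · intro hx
    exact le_of_not_gt (fix_out hw (not_lt.2 hx))
  · intro hwx
    by_contra hx
    push_neg at hx
    rw [fix_low hw hx] at hwx
    omega

lemma card_FixF (hr : r ≤ n) : (FixF hr).card = (n - r).factorial := by
  classical
  have h1 : (FixF hr).card
      = (Finset.univ : Finset (Equiv.Perm {x : Fin n // r ≤ (x : ℕ)})).card := by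
    refine Finset.card_bij'
      (fun w hw => Equiv.Perm.subtypePerm w (fun x => (subtype_iff hw x).symm))
      (fun σ _ => Equiv.Perm.ofSubtype σ)
      (fun w hw => Finset.mem_univ _)
      (fun σ _ => ?_) (fun w hw => ?_) (fun σ _ => ?_)
    · refine mem_FixF.2 fun i => ?_
      exact Equiv.Perm.ofSubtype_apply_of_not_mem σ (by simp only [not_le, Fin.coe_castLE]; exact i.isLt)
    · have key : Equiv.Perm.ofSubtype (w.subtypePerm (p := fun x : Fin n => r ≤ (x : ℕ)) (fun x => (subtype_iff hw x).symm)) = w := by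
        ext x
        by_cases hx : r ≤ (x : ℕ)
        · have h5 := Equiv.Perm.ofSubtype_apply_of_mem (w.subtypePerm (p := fun x : Fin n => r ≤ (x : ℕ)) (fun x => (subtype_iff hw x).symm)) hx
          rw [h5, Equiv.Perm.subtypePerm_apply]
        · have h5 := Equiv.Perm.ofSubtype_apply_of_not_mem (a := x)
            (w.subtypePerm (p := fun x : Fin n => r ≤ (x : ℕ)) (fun x => (subtype_iff hw x).symm)) hx
          rw [h5, fix_low hw (by omega)]
      exact key
    · have key : ∀ x : {x : Fin n // r ≤ (x : ℕ)},
          (Equiv.Perm.ofSubtype σ) (x : Fin n) = ((σ x : {x : Fin n // r ≤ (x : ℕ)}) : Fin n) :=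
        fun x => Equiv.Perm.ofSubtype_apply_of_mem σ x.2
      ext x
      rw [Equiv.Perm.subtypePerm_apply]
      simp only
      rw [key x]
  rw [h1, Finset.card_univ, Fintype.card_perm]
  congr 1
  have e : {x : Fin n // r ≤ (x : ℕ)} ≃ Fin (n - r) :=
    { toFun := fun x => ⟨(x.1 : ℕ) - r, by have := x.1.isLt; have := x.2; omega⟩
      invFun := fun y => ⟨⟨(y : ℕ) + r, by have := y.isLt; omega⟩, by simp⟩
      left_inv := fun x => by
        ext
        simp only [Fin.val_mk]
        have := x.2
        omega
      right_inv := fun y => by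
        ext
        simp only [Fin.val_mk]
        omega }
  rw [Fintype.card_congr e, Fintype.card_fin]

end Part2Helpers
section Part2Main

lemma nonfix_vanish {n : ℕ} {l : List ℕ} (hl : List.Pairwise (· > ·) l)
    (hlpos : ∀ k ∈ l, 0 < k) (hln : l.length ≤ n) {w : Equiv.Perm (Fin n)}
    (hw : w ∈ Wf hln (bmu n l) n) (hnf : w ∉ FixF hln) :
    TermFA hln (fun j => l.get j) (bmu n l) w = 0 := by
  classical
  have hslot : ∀ i : Fin l.length, ((w (Fin.castLE hln i)) : ℕ) < l.length :=
    fun i => (bmu_ne_zero hlpos _).1 (mem_Wf_top.1 hw i)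
  set S := Finset.univ.filter
    (fun i : Fin l.length => w (Fin.castLE hln i) ≠ Fin.castLE hln i) with hS
  have hSne : S.Nonempty := by
    by_contra hc
    rw [Finset.not_nonempty_iff_eq_empty, Finset.filter_eq_empty_iff] at hc
    exact hnf (mem_FixF.2 fun i => not_not.1 (hc (Finset.mem_univ i)))
  set a := S.min' hSne with ha
  have haS : a ∈ S := Finset.min'_mem _ _
  have ha_ne : w (Fin.castLE hln a) ≠ Fin.castLE hln a := (Finset.mem_filter.1 haS).2
  have hgt : (a : ℕ) < ((w (Fin.castLE hln a)) : ℕ) := by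
    by_contra hc
    push_neg at hc
    have hlt : ((w (Fin.castLE hln a)) : ℕ) < (a : ℕ) := by
      rcases lt_or_eq_of_le hc with h | h
      · exact h
      · exact absurd (Fin.ext (by rw [h, Fin.coe_castLE]) :
          w (Fin.castLE hln a) = Fin.castLE hln a) ha_ne
    have hi'a : (⟨((w (Fin.castLE hln a)) : ℕ), hslot a⟩ : Fin l.length) < a := hlt
    have hi'notS : (⟨((w (Fin.castLE hln a)) : ℕ), hslot a⟩ : Fin l.length) ∉ S :=
      fun hin => absurd (Finset.min'_le S _ hin) (not_le.2 hi'a)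
    have hfix' : w (Fin.castLE hln ⟨((w (Fin.castLE hln a)) : ℕ), hslot a⟩)
        = Fin.castLE hln ⟨((w (Fin.castLE hln a)) : ℕ), hslot a⟩ := by
      by_contra hcon
      exact hi'notS (Finset.mem_filter.2 ⟨Finset.mem_univ _, hcon⟩)
    have hc2 : Fin.castLE hln (⟨((w (Fin.castLE hln a)) : ℕ), hslot a⟩ : Fin l.length)
        = w (Fin.castLE hln a) := Fin.ext rfl
    rw [hc2] at hfix'
    exact ha_ne (w.injective hfix')
  rw [TermFA]
  refine mul_eq_zero_of_left (Finset.prod_eq_zero (Finset.mem_univ a) ?_) _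
  rw [bmu_pos _ (hslot a)]
  refine db_vanish (hlpos _ (l.get_mem ⟨_, hslot a⟩)) ?_
  exact hl.rel_get_of_lt (show a < ⟨((w (Fin.castLE hln a)) : ℕ), hslot a⟩ from hgt)

lemma fixed_term {n : ℕ} {l : List ℕ} (hl : List.Pairwise (· > ·) l)
    (hlpos : ∀ k ∈ l, 0 < k) (hln : l.length ≤ n) {w : Equiv.Perm (Fin n)}
    (hw : w ∈ FixF hln) :
    TermFA hln (fun j => l.get j) (bmu n l) w
      = ∏ i : Fin l.length,
          (op betF (nb (l.get i)) (nb (l.get i)) *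
            (∏ k ∈ (Finset.Icc 1 (l.get i - 1)) \
                ((Finset.univ.filter fun j : Fin l.length => i < j).image
                  fun j => l.get j),
              op betF (nb (l.get i)) (bF k)) *
            ∏ j ∈ Finset.univ.filter fun j : Fin l.length => i < j,
              op betF (nb (l.get i)) (nb (l.get j))) := by
  classical
  have hvslot : ∀ j : Fin l.length, bmu n l (w (Fin.castLE hln j)) = nb (l.get j) := by
    intro j
    rw [mem_FixF.1 hw j, bmu_pos _ (by rw [Fin.coe_castLE]; exact j.isLt)]
    exact congrArg nb (congrArg l.get (Fin.ext (Fin.coe_castLE hln j)))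
  have hvout : ∀ j : Fin n, ¬ ((j : ℕ) < l.length) → bmu n l (w j) = 0 :=
    fun j hj => bmu_zero _ (fix_out hw hj)
  rw [TermFA, Phi, ← Finset.prod_mul_distrib]
  refine Finset.prod_congr rfl fun i _ => ?_
  rw [hvslot i]
  rw [← Finset.prod_filter_mul_prod_filter_not
    (Finset.univ.filter fun j : Fin n => (i : ℕ) < (j : ℕ))
    (fun j : Fin n => (j : ℕ) < l.length)]
  have hone : (∏ j ∈ (Finset.univ.filter fun j : Fin n => (i : ℕ) < (j : ℕ)).filter
      (fun j : Fin n => ¬ (j : ℕ) < l.length),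
      op betF (nb (l.get i)) (bmu n l (w j)) / om betF (nb (l.get i)) (bmu n l (w j))) = 1 := by
    refine Finset.prod_eq_one fun j hj => ?_
    rw [hvout j (Finset.mem_filter.1 hj).2, op_zero', om_zero',
      div_self (nb_ne_zero (l.get i))]
  rw [hone, mul_one, Finset.filter_filter]
  have hre : (∏ j ∈ Finset.univ.filter
        (fun j : Fin n => ((i : ℕ) < (j : ℕ) ∧ (j : ℕ) < l.length)),
      op betF (nb (l.get i)) (bmu n l (w j)) / om betF (nb (l.get i)) (bmu n l (w j)))
      = ∏ j ∈ Finset.univ.filter fun j : Fin l.length => i < j,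
          op betF (nb (l.get i)) (nb (l.get j)) / om betF (nb (l.get i)) (nb (l.get j)) := by
    refine Finset.prod_bij'
      (fun j hj => (⟨(j : ℕ), (Finset.mem_filter.1 hj).2.2⟩ : Fin l.length))
      (fun j' _ => Fin.castLE hln j') ?_ ?_ ?_ ?_ ?_
    · intro j hj
      simp only [Finset.mem_filter, Finset.mem_univ, true_and]
      exact (Finset.mem_filter.1 hj).2.1
    · intro j' hj'
      simp only [Finset.mem_filter, Finset.mem_univ, true_and, Fin.coe_castLE]
      exact ⟨(Finset.mem_filter.1 hj').2, j'.isLt⟩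
    · intro j hj
      exact Fin.ext rfl
    · intro j' hj'
      exact Fin.ext (Fin.coe_castLE hln j')
    · intro j hj
      have hjr : (j : ℕ) < l.length := (Finset.mem_filter.1 hj).2.2
      have hwj : w j = j := fix_low hw hjr
      rw [hwj, bmu_pos j hjr]
  rw [hre]
  have hconv : (∏ j' ∈ Finset.univ.filter fun j : Fin l.length => i < j,
        op betF (nb (l.get i)) (nb (l.get j')) / om betF (nb (l.get i)) (nb (l.get j')))
      = ∏ j' ∈ Finset.univ.filter fun j : Fin l.length => i < j,
        op betF (nb (l.get i)) (nb (l.get j')) / op betF (nb (l.get i)) (bF (l.get j')) :=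
    Finset.prod_congr rfl fun j' _ => by rw [om_nb]
  rw [hconv, Finset.prod_div_distrib]
  rw [db_expand betF bF _ (hlpos _ (l.get_mem i))]
  have himg_sub : ((Finset.univ.filter fun j : Fin l.length => i < j).image
      fun j => l.get j) ⊆ Finset.Icc 1 (l.get i - 1) := by
    intro k hk
    obtain ⟨j', hj', rfl⟩ := Finset.mem_image.1 hk
    have hij : i < j' := (Finset.mem_filter.1 hj').2
    have h1 : l.get j' < l.get i := hl.rel_get_of_lt hij
    have h2 : 0 < l.get j' := hlpos _ (l.get_mem j')
    rw [Finset.mem_Icc]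
    omega
  rw [← Finset.prod_sdiff himg_sub]
  rw [Finset.prod_image (fun x hx y hy hxy => by
    by_contra hne
    exact get_ne_of_ne hl hne hxy)]
  have hMb : (∏ j' ∈ Finset.univ.filter fun j : Fin l.length => i < j,
      op betF (nb (l.get i)) (bF (l.get j'))) ≠ 0 := by
    refine Finset.prod_ne_zero_iff.2 fun j' hj' => ?_
    exact op_nb_bt_ne_zero (get_ne_of_ne hl (ne_of_lt (Finset.mem_filter.1 hj').2))
  set A := op betF (nb (l.get i)) (nb (l.get i))
  set D := ∏ k ∈ (Finset.Icc 1 (l.get i - 1)) \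
      ((Finset.univ.filter fun j : Fin l.length => i < j).image fun j => l.get j),
      op betF (nb (l.get i)) (bF k)
  set Mb := ∏ j' ∈ Finset.univ.filter fun j : Fin l.length => i < j,
      op betF (nb (l.get i)) (bF (l.get j'))
  set Pn := ∏ j' ∈ Finset.univ.filter fun j : Fin l.length => i < j,
      op betF (nb (l.get i)) (nb (l.get j'))
  calc A * (D * Mb) * (Pn / Mb) = A * D * (Mb * Pn / Mb) := by ring
    _ = A * D * Pn := by rw [mul_div_cancel_left₀ _ hMb]

end Part2Main
section Final

lemma part2 (n : ℕ) (l : List ℕ) (hl : List.Pairwise (· > ·) l)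
    (hlpos : ∀ k ∈ l, 0 < k) (hln : l.length ≤ n) (g : PX n)
    (hg : algebraMap (PX n) (K n) g
      = GQ (betK n) (bbK n) (xvK n) hln (fun j => l.get j)) :
    MvPolynomial.eval₂ (algebraMap A FA) (bmu n l) g
      = ∏ i : Fin l.length,
          (op betF (nb (l.get i)) (nb (l.get i)) *
            (∏ k ∈ (Finset.Icc 1 (l.get i - 1)) \
                ((Finset.univ.filter fun j : Fin l.length => i < j).image
                  fun j => l.get j),
              op betF (nb (l.get i)) (bF k)) *
            ∏ j ∈ Finset.univ.filter fun j : Fin l.length => i < j,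
              op betF (nb (l.get i)) (nb (l.get j))) := by
  have hlam : ∀ j : Fin l.length, 1 ≤ l.get j := fun j => hlpos _ (l.get_mem j)
  have RED := transfer hln (fun j => l.get j) (bmu n l) (bmu_good hl hlpos) hlam g hg
  have hsub : FixF hln ⊆ Wf hln (bmu n l) n := by
    intro w hw
    refine mem_Wf_top.2 fun i => ?_
    rw [mem_FixF.1 hw i, bmu_pos _ (by rw [Fin.coe_castLE]; exact i.isLt)]
    exact nb_ne_zero _
  have hsum : ∑ w ∈ Wf hln (bmu n l) n, TermFA hln (fun j => l.get j) (bmu n l) w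
      = ∑ w ∈ FixF hln, TermFA hln (fun j => l.get j) (bmu n l) w :=
    (Finset.sum_subset hsub (fun w hw hnf => nonfix_vanish hl hlpos hln hw hnf)).symm
  rw [hsum] at RED
  rw [Finset.sum_congr rfl (fun w hw => fixed_term hl hlpos hln hw)] at RED
  rw [Finset.sum_const, card_FixF, nsmul_eq_mul] at RED
  exact mul_left_cancel₀ (fact_ne_zero_FA _) RED

end Final
theorem statement17 (n : ℕ) (l m : List ℕ)
    (hl : List.Pairwise (· > ·) l) (hlpos : ∀ k ∈ l, 0 < k) (hln : l.length ≤ n)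
    (hm : List.Pairwise (· > ·) m) (hmpos : ∀ k ∈ m, 0 < k) (hmn : m.length ≤ n)
    (g : PX n)
    (hg : algebraMap (PX n) (K n) g
      = GQ (betK n) (bbK n) (xvK n) hln (fun j => l.get j)) :
    (¬ Sub l m → MvPolynomial.eval₂ (algebraMap A FA) (bmu n m) g = 0) ∧
    MvPolynomial.eval₂ (algebraMap A FA) (bmu n l) g
      = ∏ i : Fin l.length,
          (op betF (nb (l.get i)) (nb (l.get i)) *
            (∏ k ∈ (Finset.Icc 1 (l.get i - 1)) \
                ((Finset.univ.filter fun j : Fin l.length => i < j).image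
                  fun j => l.get j),
              op betF (nb (l.get i)) (bF k)) *
            ∏ j ∈ Finset.univ.filter fun j : Fin l.length => i < j,
              op betF (nb (l.get i)) (nb (l.get j))) := by
  exact ⟨fun hns => part1 n l m hl hlpos hln hm hmpos hmn g hg hns,
    part2 n l hl hlpos hln g hg⟩

end Stmt17
end
end
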